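/- arXiv:math/0206271 — 3 statements merged into one kernel-verified Lean document; each statement's English description precedes it below -/
import Mathlib

section
/- The bivector field η = i g^{l̄k} ∂_k ∧ ∂̄_l is Poisson: the bracket defined on smooth functions f, h : U → ℂ by {f,h} = i Σ_{k,l} g^{l̄k} ((∂_k f)(∂̄_l h) − (∂̄_l f)(∂_k h)) satisfies the Jacobi identity {f,{g,h}} + {g,{h,f}} + {h,{f,g}} = 0 on U for all smooth f, g, h : U → ℂ. -/
open scoped BigOperators

noncomputable section

/-- The `k`-th standard basis vector of `ℂⁿ`. -/
def ebasis (n : ℕ) (k : Fin n) : Fin n → ℂ := Pi.single k 1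

/-- The holomorphic Wirtinger derivative `∂ₖ f`, computed via the real Fréchet derivative:
`∂ₖ f (z) = (1/2) (Df(z)(eₖ) - i · Df(z)(i·eₖ))`. -/
def wdP (n : ℕ) (k : Fin n) (f : (Fin n → ℂ) → ℂ) : (Fin n → ℂ) → ℂ :=
  fun z => (1 / 2 : ℂ) *
    (fderiv ℝ f z (ebasis n k) - Complex.I * fderiv ℝ f z (Complex.I • ebasis n k))

/-- The antiholomorphic Wirtinger derivative `∂̄ₖ f`:
`∂̄ₖ f (z) = (1/2) (Df(z)(eₖ) + i · Df(z)(i·eₖ))`. -/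
def wdB (n : ℕ) (k : Fin n) (f : (Fin n → ℂ) → ℂ) : (Fin n → ℂ) → ℂ :=
  fun z => (1 / 2 : ℂ) *
    (fderiv ℝ f z (ebasis n k) + Complex.I * fderiv ℝ f z (Complex.I • ebasis n k))

/-- The Kähler potential viewed as a complex valued function. -/
def Phic (n : ℕ) (Φ : (Fin n → ℂ) → ℝ) : (Fin n → ℂ) → ℂ := fun z => (Φ z : ℂ)

/-- The metric `g_{k l̄} = ∂_k ∂̄_l Φ`. -/
def gdn (n : ℕ) (Φ : (Fin n → ℂ) → ℝ) (k l : Fin n) : (Fin n → ℂ) → ℂ :=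
  wdP n k (wdB n l (Phic n Φ))

/-- `g_{k p t̄} = ∂_k ∂_p ∂̄_t Φ`. -/
def g3h (n : ℕ) (Φ : (Fin n → ℂ) → ℝ) (k p t : Fin n) : (Fin n → ℂ) → ℂ :=
  wdP n k (wdP n p (wdB n t (Phic n Φ)))

/-- `g_{s q̄ l̄} = ∂_s ∂̄_q ∂̄_l Φ`. -/
def g3a (n : ℕ) (Φ : (Fin n → ℂ) → ℝ) (s q l : Fin n) : (Fin n → ℂ) → ℂ :=
  wdP n s (wdB n q (wdB n l (Phic n Φ)))

/-- `g_{a b̄ k l̄} = ∂_a ∂_k ∂̄_b ∂̄_l Φ`. -/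
def g4 (n : ℕ) (Φ : (Fin n → ℂ) → ℝ) (a b k l : Fin n) : (Fin n → ℂ) → ℂ :=
  wdP n a (wdP n k (wdB n b (wdB n l (Phic n Φ))))

/-- The Poisson bracket `{f,h} = i Σ_{k,l} g^{l̄k} ((∂_k f)(∂̄_l h) - (∂̄_l f)(∂_k h))`. -/
def pb (n : ℕ) (ginv : Fin n → Fin n → (Fin n → ℂ) → ℂ)
    (f h : (Fin n → ℂ) → ℂ) : (Fin n → ℂ) → ℂ :=
  fun z => Complex.I * ∑ k, ∑ l,
    ginv l k z * (wdP n k f z * wdB n l h z - wdB n l f z * wdP n k h z)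

open Filter Finset Topology
open scoped ContDiff

namespace S13

theorem one_le_inf : (1 : WithTop ℕ∞) ≤ ∞ := by
  rw [show (1 : WithTop ℕ∞) = ((1:ℕ∞) : WithTop ℕ∞) by norm_cast]
  exact WithTop.coe_le_coe.mpr le_top

theorem two_le_inf : (2 : WithTop ℕ∞) ≤ ∞ := by
  rw [show (2 : WithTop ℕ∞) = ((2:ℕ∞) : WithTop ℕ∞) by norm_cast]
  exact WithTop.coe_le_coe.mpr le_top

def wop (n : ℕ) (a b : ℂ) (v w : Fin n → ℂ) (F : (Fin n → ℂ) → ℂ) (z : Fin n → ℂ) : ℂ :=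
  a * fderiv ℝ F z v + b * fderiv ℝ F z w

variable {n : ℕ} {U : Set (Fin n → ℂ)} {F G : (Fin n → ℂ) → ℂ} {z : Fin n → ℂ}
  {a b : ℂ} {v w : Fin n → ℂ}

theorem wdP_eq (k : Fin n) (F : (Fin n → ℂ) → ℂ) :
    wdP n k F = wop n (1/2) (-(Complex.I/2)) (ebasis n k) (Complex.I • ebasis n k) F := by
  funext z; simp only [wdP, wop]; ring

theorem wop_congr (h : F =ᶠ[𝓝 z] G) : wop n a b v w F z = wop n a b v w G z := by
  unfold wop; rw [h.fderiv_eq]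

theorem wop_const (c : ℂ) : wop n a b v w (fun _ => c) z = 0 := by
  simp [wop]

theorem wop_mul (hF : DifferentiableAt ℝ F z) (hG : DifferentiableAt ℝ G z) :
    wop n a b v w (fun y => F y * G y) z
      = wop n a b v w F z * G z + F z * wop n a b v w G z := by
  simp only [wop, fderiv_fun_mul hF hG, ContinuousLinearMap.add_apply,
    ContinuousLinearMap.smul_apply, smul_eq_mul]
  ring

theorem wop_const_mul (hF : DifferentiableAt ℝ F z) (c : ℂ) :
    wop n a b v w (fun y => c * F y) z = c * wop n a b v w F z := by
  simp only [wop, fderiv_const_mul hF, ContinuousLinearMap.smul_apply, smul_eq_mul]; ring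

theorem wop_sum {ι : Type*} (s : Finset ι) (A : ι → (Fin n → ℂ) → ℂ)
    (h : ∀ i ∈ s, DifferentiableAt ℝ (A i) z) :
    wop n a b v w (fun y => ∑ i ∈ s, A i y) z = ∑ i ∈ s, wop n a b v w (A i) z := by
  simp only [wop, fderiv_fun_sum h, ContinuousLinearMap.sum_apply, Finset.mul_sum,
    ← Finset.sum_add_distrib]

theorem contDiffOn_dd (hU : IsOpen U) (hF : ContDiffOn ℝ (⊤ : ℕ∞) F U) (v : Fin n → ℂ) :
    ContDiffOn ℝ (⊤ : ℕ∞) (fun z => fderiv ℝ F z v) U :=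
  (hF.fderiv_of_isOpen hU (by simp)).clm_apply contDiffOn_const

theorem diffAt (hU : IsOpen U) (hF : ContDiffOn ℝ (⊤ : ℕ∞) F U) (hz : z ∈ U) :
    DifferentiableAt ℝ F z :=
  (hF.contDiffAt (hU.mem_nhds hz)).differentiableAt (lt_of_lt_of_le zero_lt_one one_le_inf).ne'

theorem contDiffOn_wop (hU : IsOpen U) (hF : ContDiffOn ℝ (⊤ : ℕ∞) F U) :
    ContDiffOn ℝ (⊤ : ℕ∞) (wop n a b v w F) U :=
  (contDiffOn_const.mul (contDiffOn_dd hU hF v)).add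
    (contDiffOn_const.mul (contDiffOn_dd hU hF w))

theorem dd_symm (hU : IsOpen U) (hF : ContDiffOn ℝ (⊤ : ℕ∞) F U) (hz : z ∈ U)
    (v w : Fin n → ℂ) :
    fderiv ℝ (fun y => fderiv ℝ F y v) z w = fderiv ℝ (fun y => fderiv ℝ F y w) z v := by
  have hat : ContDiffAt ℝ (⊤ : ℕ∞) F z := hF.contDiffAt (hU.mem_nhds hz)
  have hsymm := hat.isSymmSndFDerivAt (by rw [minSmoothness_of_isRCLikeNormedField]; exact two_le_inf)
  have hdF : DifferentiableAt ℝ (fderiv ℝ F) z :=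
    ((hF.fderiv_of_isOpen (m := ∞) hU (by simp)).contDiffAt (hU.mem_nhds hz)).differentiableAt (lt_of_lt_of_le zero_lt_one one_le_inf).ne'
  have hc : ∀ u : Fin n → ℂ, fderiv ℝ (fun y => fderiv ℝ F y u) z
      = (ContinuousLinearMap.apply ℝ ℂ u).comp (fderiv ℝ (fderiv ℝ F) z) := by
    intro u
    have he : (fun y => fderiv ℝ F y u) = (ContinuousLinearMap.apply ℝ ℂ u) ∘ (fderiv ℝ F) := rfl
    rw [he, fderiv_comp z (ContinuousLinearMap.apply ℝ ℂ u).differentiableAt hdF,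
      ContinuousLinearMap.fderiv]
  rw [hc v, hc w]
  exact hsymm w v

theorem fderiv_wop (hU : IsOpen U) (hF : ContDiffOn ℝ (⊤ : ℕ∞) F U) (hz : z ∈ U)
    (u : Fin n → ℂ) :
    fderiv ℝ (wop n a b v w F) z u
      = a * fderiv ℝ (fun y => fderiv ℝ F y v) z u
        + b * fderiv ℝ (fun y => fderiv ℝ F y w) z u := by
  have h1 : DifferentiableAt ℝ (fun y => fderiv ℝ F y v) z :=
    diffAt hU (contDiffOn_dd hU hF v) hz
  have h2 : DifferentiableAt ℝ (fun y => fderiv ℝ F y w) z :=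
    diffAt hU (contDiffOn_dd hU hF w) hz
  have he : wop n a b v w F = fun y => a * fderiv ℝ F y v + b * fderiv ℝ F y w := rfl
  rw [he, fderiv_fun_add (h1.const_mul a) (h2.const_mul b), fderiv_const_mul h1,
    fderiv_const_mul h2]
  simp

theorem wop_comm {a' b' : ℂ} {v' w' : Fin n → ℂ} (hU : IsOpen U)
    (hF : ContDiffOn ℝ (⊤ : ℕ∞) F U) (hz : z ∈ U) :
    wop n a b v w (wop n a' b' v' w' F) z = wop n a' b' v' w' (wop n a b v w F) z := by
  show a * fderiv ℝ (wop n a' b' v' w' F) z v + b * fderiv ℝ (wop n a' b' v' w' F) z w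
    = a' * fderiv ℝ (wop n a b v w F) z v' + b' * fderiv ℝ (wop n a b v w F) z w'
  rw [fderiv_wop hU hF hz v, fderiv_wop hU hF hz w, fderiv_wop hU hF hz v',
    fderiv_wop hU hF hz w', dd_symm hU hF hz v v', dd_symm hU hF hz w v',
    dd_symm hU hF hz v w', dd_symm hU hF hz w w']
  ring

end S13

namespace S13
variable {n : ℕ} {U : Set (Fin n → ℂ)} {F G : (Fin n → ℂ) → ℂ} {z : Fin n → ℂ}

theorem wdB_eq (k : Fin n) (F : (Fin n → ℂ) → ℂ) :
    wdB n k F = wop n (1/2) (Complex.I/2) (ebasis n k) (Complex.I • ebasis n k) F := by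
  funext z; simp only [wdB, wop]; ring

/-- doubled-index first-order operator: `inl k ↦ ∂ₖ`, `inr l ↦ ∂̄ₗ`. -/
def DDb {n : ℕ} : Fin n ⊕ Fin n → ℂ := Sum.elim (fun _ => -(Complex.I/2)) (fun _ => Complex.I/2)
def DDi {n : ℕ} : Fin n ⊕ Fin n → Fin n := Sum.elim id id

def DD (n : ℕ) (e : Fin n ⊕ Fin n) : ((Fin n → ℂ) → ℂ) → (Fin n → ℂ) → ℂ :=
  wop n (1/2) (DDb e) (ebasis n (DDi e)) (Complex.I • ebasis n (DDi e))

theorem DD_inl (k : Fin n) (F : (Fin n → ℂ) → ℂ) : DD n (Sum.inl k) F = wdP n k F := by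
  rw [wdP_eq]; rfl

theorem DD_inr (l : Fin n) (F : (Fin n → ℂ) → ℂ) : DD n (Sum.inr l) F = wdB n l F := by
  rw [wdB_eq]; rfl

theorem contDiffOn_DD (hU : IsOpen U) (hF : ContDiffOn ℝ (⊤ : ℕ∞) F U) (e : Fin n ⊕ Fin n) :
    ContDiffOn ℝ (⊤ : ℕ∞) (DD n e F) U := contDiffOn_wop hU hF

theorem DD_comm (hU : IsOpen U) (hF : ContDiffOn ℝ (⊤ : ℕ∞) F U) (hz : z ∈ U)
    (e e' : Fin n ⊕ Fin n) :
    DD n e (DD n e' F) z = DD n e' (DD n e F) z := wop_comm hU hF hz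

theorem DD_congr (e : Fin n ⊕ Fin n) (h : F =ᶠ[𝓝 z] G) : DD n e F z = DD n e G z :=
  wop_congr h

theorem DD_const (e : Fin n ⊕ Fin n) (c : ℂ) : DD n e (fun _ => c) z = 0 := wop_const c

theorem DD_mul (e : Fin n ⊕ Fin n) (hF : DifferentiableAt ℝ F z)
    (hG : DifferentiableAt ℝ G z) :
    DD n e (fun y => F y * G y) z = DD n e F z * G z + F z * DD n e G z := wop_mul hF hG

theorem DD_const_mul (e : Fin n ⊕ Fin n) (hF : DifferentiableAt ℝ F z) (c : ℂ) :
    DD n e (fun y => c * F y) z = c * DD n e F z := wop_const_mul hF c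

theorem DD_sum {ι : Type*} (e : Fin n ⊕ Fin n) (s : Finset ι) (A : ι → (Fin n → ℂ) → ℂ)
    (h : ∀ i ∈ s, DifferentiableAt ℝ (A i) z) :
    DD n e (fun y => ∑ i ∈ s, A i y) z = ∑ i ∈ s, DD n e (A i) z := wop_sum s A h

/-- the Poisson bivector on doubled indices -/
def Lam (n : ℕ) (ginv : Fin n → Fin n → (Fin n → ℂ) → ℂ) :
    (Fin n ⊕ Fin n) → (Fin n ⊕ Fin n) → (Fin n → ℂ) → ℂ
  | Sum.inl k, Sum.inr l => fun z => Complex.I * ginv l k z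
  | Sum.inr l, Sum.inl k => fun z => (-Complex.I) * ginv l k z
  | Sum.inl _, Sum.inl _ => fun _ => 0
  | Sum.inr _, Sum.inr _ => fun _ => 0

variable {ginv : Fin n → Fin n → (Fin n → ℂ) → ℂ}

theorem Lam_ll (k p : Fin n) : Lam n ginv (Sum.inl k) (Sum.inl p) = fun _ => 0 := rfl
theorem Lam_rr (k p : Fin n) : Lam n ginv (Sum.inr k) (Sum.inr p) = fun _ => 0 := rfl
theorem Lam_lr (k l : Fin n) :
    Lam n ginv (Sum.inl k) (Sum.inr l) = fun z => Complex.I * ginv l k z := rfl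
theorem Lam_rl (l k : Fin n) :
    Lam n ginv (Sum.inr l) (Sum.inl k) = fun z => (-Complex.I) * ginv l k z := rfl

theorem contDiffOn_Lam (hU : IsOpen U) (hg : ∀ l k, ContDiffOn ℝ (⊤ : ℕ∞) (ginv l k) U)
    (c d : Fin n ⊕ Fin n) : ContDiffOn ℝ (⊤ : ℕ∞) (Lam n ginv c d) U := by
  rcases c with k | l <;> rcases d with p | q
  · exact contDiffOn_const
  · exact contDiffOn_const.mul (hg q k)
  · exact contDiffOn_const.mul (hg l p)
  · exact contDiffOn_const

theorem pb_eq (f h : (Fin n → ℂ) → ℂ) :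
    pb n ginv f h = fun z => ∑ p : (Fin n ⊕ Fin n) × (Fin n ⊕ Fin n),
      Lam n ginv p.1 p.2 z * (DD n p.1 f z * DD n p.2 h z) := by
  funext z
  rw [Fintype.sum_prod_type]
  simp only [Fintype.sum_sum_type, Lam_ll, Lam_rr, Lam_lr, Lam_rl, DD_inl, DD_inr,
    zero_mul, Finset.sum_const_zero, add_zero, zero_add]
  have hswap : ∑ l : Fin n, ∑ k : Fin n,
      (-Complex.I) * ginv l k z * (wdB n l f z * wdP n k h z)
      = ∑ k : Fin n, ∑ l : Fin n,
      (-Complex.I) * ginv l k z * (wdB n l f z * wdP n k h z) := Finset.sum_comm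
  rw [hswap, pb, Finset.mul_sum, ← Finset.sum_add_distrib]
  refine Finset.sum_congr rfl fun k _ => ?_
  rw [Finset.mul_sum, ← Finset.sum_add_distrib]
  exact Finset.sum_congr rfl fun l _ => by ring

end S13

namespace S13
variable {n : ℕ} {U : Set (Fin n → ℂ)} {z : Fin n → ℂ}
  {ginv : Fin n → Fin n → (Fin n → ℂ) → ℂ}

theorem DD_pb (hU : IsOpen U) (hz : z ∈ U)
    (hg : ∀ l k, ContDiffOn ℝ (⊤ : ℕ∞) (ginv l k) U)
    {g h : (Fin n → ℂ) → ℂ}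
    (hgs : ContDiffOn ℝ (⊤ : ℕ∞) g U) (hhs : ContDiffOn ℝ (⊤ : ℕ∞) h U)
    (e : Fin n ⊕ Fin n) :
    DD n e (pb n ginv g h) z = ∑ q : (Fin n ⊕ Fin n) × (Fin n ⊕ Fin n),
      (DD n e (Lam n ginv q.1 q.2) z * (DD n q.1 g z * DD n q.2 h z)
        + Lam n ginv q.1 q.2 z * (DD n e (DD n q.1 g) z * DD n q.2 h z
            + DD n q.1 g z * DD n e (DD n q.2 h) z)) := by
  have hdiff : ∀ q : (Fin n ⊕ Fin n) × (Fin n ⊕ Fin n), ∀ w ∈ U,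
      DifferentiableAt ℝ (fun y => Lam n ginv q.1 q.2 y * (DD n q.1 g y * DD n q.2 h y)) w :=
    fun q w hw => ((diffAt hU (contDiffOn_Lam hU hg q.1 q.2) hw).mul
      ((diffAt hU (contDiffOn_DD hU hgs q.1) hw).mul (diffAt hU (contDiffOn_DD hU hhs q.2) hw)))
  rw [pb_eq (ginv := ginv) g h]
  rw [DD_sum e Finset.univ
    (fun q y => Lam n ginv q.1 q.2 y * (DD n q.1 g y * DD n q.2 h y))
    (fun q _ => hdiff q z hz)]
  refine Finset.sum_congr rfl fun q _ => ?_
  rw [DD_mul (G := fun y => DD n q.1 g y * DD n q.2 h y) e (diffAt hU (contDiffOn_Lam hU hg q.1 q.2) hz)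
    ((diffAt hU (contDiffOn_DD hU hgs q.1) hz).mul (diffAt hU (contDiffOn_DD hU hhs q.2) hz)),
    DD_mul e (diffAt hU (contDiffOn_DD hU hgs q.1) hz) (diffAt hU (contDiffOn_DD hU hhs q.2) hz)]

section Alg
variable {ι : Type*} [Fintype ι]

/-- abstract form of `{f, {g, h}}` at a point -/
def Jp (L : ι → ι → ℂ) (dL : ι → ι → ι → ℂ) (Df Dg Dh : ι → ℂ) (Fg Fh : ι → ι → ℂ) : ℂ :=
  ∑ p : ι × ι, L p.1 p.2 * (Df p.1 * ∑ q : ι × ι,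
    (dL p.2 q.1 q.2 * (Dg q.1 * Dh q.2)
      + L q.1 q.2 * (Fg p.2 q.1 * Dh q.2 + Dg q.1 * Fh p.2 q.2)))

def SA (L : ι → ι → ℂ) (dL : ι → ι → ι → ℂ) (X Y Z : ι → ℂ) : ℂ :=
  ∑ r : (ι × ι) × (ι × ι),
    L r.1.1 r.1.2 * X r.1.1 * (dL r.1.2 r.2.1 r.2.2 * Y r.2.1 * Z r.2.2)

def SB (L : ι → ι → ℂ) (X : ι → ℂ) (Fm : ι → ι → ℂ) (Z : ι → ℂ) : ℂ :=
  ∑ r : (ι × ι) × (ι × ι),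
    L r.1.1 r.1.2 * X r.1.1 * (L r.2.1 r.2.2 * Fm r.1.2 r.2.1 * Z r.2.2)

def SC (L : ι → ι → ℂ) (X Y : ι → ℂ) (Fm : ι → ι → ℂ) : ℂ :=
  ∑ r : (ι × ι) × (ι × ι),
    L r.1.1 r.1.2 * X r.1.1 * (L r.2.1 r.2.2 * Y r.2.1 * Fm r.1.2 r.2.2)

def sBC {ι : Type*} : ((ι × ι) × (ι × ι)) ≃ ((ι × ι) × (ι × ι)) :=
  ⟨fun r => ((r.2.2, r.2.1), (r.1.1, r.1.2)),
   fun r => ((r.2.1, r.2.2), (r.1.2, r.1.1)),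
   fun r => rfl, fun r => rfl⟩

def sA1 {ι : Type*} : ((ι × ι) × (ι × ι)) ≃ ((ι × ι) × (ι × ι)) :=
  ⟨fun r => ((r.1.1, r.2.2), (r.1.2, r.2.1)),
   fun r => ((r.1.1, r.2.1), (r.2.2, r.1.2)),
   fun r => rfl, fun r => rfl⟩

def sA2 {ι : Type*} : ((ι × ι) × (ι × ι)) ≃ ((ι × ι) × (ι × ι)) :=
  ⟨fun r => ((r.1.2, r.2.2), (r.2.1, r.1.1)),
   fun r => ((r.2.2, r.1.1), (r.2.1, r.1.2)),
   fun r => rfl, fun r => rfl⟩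

def sA3 {ι : Type*} : ((ι × ι) × (ι × ι)) ≃ ((ι × ι) × (ι × ι)) :=
  ⟨fun r => ((r.2.1, r.2.2), (r.1.1, r.1.2)),
   fun r => ((r.2.1, r.2.2), (r.1.1, r.1.2)),
   fun r => rfl, fun r => rfl⟩

theorem Jp_split (L : ι → ι → ℂ) (dL : ι → ι → ι → ℂ) (Df Dg Dh : ι → ℂ)
    (Fg Fh : ι → ι → ℂ) :
    Jp L dL Df Dg Dh Fg Fh = SA L dL Df Dg Dh + SB L Df Fg Dh + SC L Df Dg Fh := by
  calc Jp L dL Df Dg Dh Fg Fh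
      = ∑ p : ι × ι, ∑ q : ι × ι, L p.1 p.2 * (Df p.1 *
          (dL p.2 q.1 q.2 * (Dg q.1 * Dh q.2)
            + L q.1 q.2 * (Fg p.2 q.1 * Dh q.2 + Dg q.1 * Fh p.2 q.2))) := by
        unfold Jp; simp only [Finset.mul_sum]
    _ = ∑ r : (ι × ι) × (ι × ι), L r.1.1 r.1.2 * (Df r.1.1 *
          (dL r.1.2 r.2.1 r.2.2 * (Dg r.2.1 * Dh r.2.2)
            + L r.2.1 r.2.2 * (Fg r.1.2 r.2.1 * Dh r.2.2 + Dg r.2.1 * Fh r.1.2 r.2.2))) :=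
        (Fintype.sum_prod_type (fun r : (ι × ι) × (ι × ι) => L r.1.1 r.1.2 * (Df r.1.1 *
          (dL r.1.2 r.2.1 r.2.2 * (Dg r.2.1 * Dh r.2.2)
            + L r.2.1 r.2.2 * (Fg r.1.2 r.2.1 * Dh r.2.2 + Dg r.2.1 * Fh r.1.2 r.2.2))))).symm
    _ = ∑ r : (ι × ι) × (ι × ι),
          (L r.1.1 r.1.2 * Df r.1.1 * (dL r.1.2 r.2.1 r.2.2 * Dg r.2.1 * Dh r.2.2)
          + L r.1.1 r.1.2 * Df r.1.1 * (L r.2.1 r.2.2 * Fg r.1.2 r.2.1 * Dh r.2.2)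
          + L r.1.1 r.1.2 * Df r.1.1 * (L r.2.1 r.2.2 * Dg r.2.1 * Fh r.1.2 r.2.2)) :=
        Finset.sum_congr rfl fun r _ => by ring
    _ = _ := by rw [Finset.sum_add_distrib, Finset.sum_add_distrib]; rfl

theorem SBC (L : ι → ι → ℂ) (X Z : ι → ℂ) (Fm : ι → ι → ℂ)
    (hL : ∀ a b, L b a = -L a b) (hF : ∀ a b, Fm a b = Fm b a) :
    SB L X Fm Z + SC L Z X Fm = 0 := by
  have h1 : SC L Z X Fm = ∑ r : (ι × ι) × (ι × ι),
      (fun r : (ι × ι) × (ι × ι) =>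
        L r.1.1 r.1.2 * Z r.1.1 * (L r.2.1 r.2.2 * X r.2.1 * Fm r.1.2 r.2.2)) (sBC r) :=
    (Equiv.sum_comp sBC _).symm
  rw [SB, h1, ← Finset.sum_add_distrib]
  refine Finset.sum_eq_zero fun r _ => ?_
  obtain ⟨⟨a, b⟩, c, d⟩ := r
  simp only [sBC, Equiv.coe_fn_mk]
  rw [hL c d, hF c b]
  ring

theorem SAsum (L : ι → ι → ℂ) (dL : ι → ι → ι → ℂ) (Df Dg Dh : ι → ℂ)
    (hcyc : ∀ a b c, ∑ e, (L a e * dL e b c + L b e * dL e c a + L c e * dL e a b) = 0) :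
    SA L dL Df Dg Dh + SA L dL Dg Dh Df + SA L dL Dh Df Dg = 0 := by
  have h1 : SA L dL Df Dg Dh = ∑ r : (ι × ι) × (ι × ι),
      (fun r : (ι × ι) × (ι × ι) =>
        L r.1.1 r.1.2 * Df r.1.1 * (dL r.1.2 r.2.1 r.2.2 * Dg r.2.1 * Dh r.2.2)) (sA1 r) :=
    (Equiv.sum_comp sA1 _).symm
  have h2 : SA L dL Dg Dh Df = ∑ r : (ι × ι) × (ι × ι),
      (fun r : (ι × ι) × (ι × ι) =>
        L r.1.1 r.1.2 * Dg r.1.1 * (dL r.1.2 r.2.1 r.2.2 * Dh r.2.1 * Df r.2.2)) (sA2 r) :=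
    (Equiv.sum_comp sA2 _).symm
  have h3 : SA L dL Dh Df Dg = ∑ r : (ι × ι) × (ι × ι),
      (fun r : (ι × ι) × (ι × ι) =>
        L r.1.1 r.1.2 * Dh r.1.1 * (dL r.1.2 r.2.1 r.2.2 * Df r.2.1 * Dg r.2.2)) (sA3 r) :=
    (Equiv.sum_comp sA3 _).symm
  rw [h1, h2, h3, ← Finset.sum_add_distrib, ← Finset.sum_add_distrib]
  calc (∑ r : (ι × ι) × (ι × ι), _)
      = ∑ r : (ι × ι) × (ι × ι), Df r.1.1 * (Dg r.1.2 * Dh r.2.1)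
          * (L r.1.1 r.2.2 * dL r.2.2 r.1.2 r.2.1 + L r.1.2 r.2.2 * dL r.2.2 r.2.1 r.1.1
            + L r.2.1 r.2.2 * dL r.2.2 r.1.1 r.1.2) := by
        refine Finset.sum_congr rfl fun r _ => ?_
        obtain ⟨⟨A, B⟩, C, e⟩ := r
        simp only [sA1, sA2, sA3, Equiv.coe_fn_mk]
        ring
    _ = 0 := by
        rw [Fintype.sum_prod_type]
        refine Finset.sum_eq_zero fun p _ => ?_
        rw [Fintype.sum_prod_type]
        refine Finset.sum_eq_zero fun C _ => ?_
        dsimp only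
        rw [← Finset.mul_sum, hcyc p.1 p.2 C, mul_zero]

theorem jacobi_alg (L : ι → ι → ℂ) (dL : ι → ι → ι → ℂ) (Df Dg Dh : ι → ℂ)
    (Ff Fg Fh : ι → ι → ℂ)
    (hL : ∀ a b, L b a = -L a b)
    (hFf : ∀ a b, Ff a b = Ff b a) (hFg : ∀ a b, Fg a b = Fg b a)
    (hFh : ∀ a b, Fh a b = Fh b a)
    (hcyc : ∀ a b c, ∑ e, (L a e * dL e b c + L b e * dL e c a + L c e * dL e a b) = 0) :
    Jp L dL Df Dg Dh Fg Fh + Jp L dL Dg Dh Df Fh Ff + Jp L dL Dh Df Dg Ff Fg = 0 := by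
  rw [Jp_split, Jp_split, Jp_split]
  have hA := SAsum L dL Df Dg Dh hcyc
  have hBg := SBC L Df Dh Fg hL hFg
  have hBh := SBC L Dg Df Fh hL hFh
  have hBf := SBC L Dh Dg Ff hL hFf
  linear_combination hA + hBg + hBh + hBf
end Alg
end S13

namespace S13
variable {n : ℕ} {U : Set (Fin n → ℂ)} {z : Fin n → ℂ}
  {Φ : (Fin n → ℂ) → ℝ} {ginv : Fin n → Fin n → (Fin n → ℂ) → ℂ}
  {a b : ℂ} {v w : Fin n → ℂ}

theorem contDiffOn_Phic (hΦ : ContDiffOn ℝ (⊤ : ℕ∞) Φ U) :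
    ContDiffOn ℝ (⊤ : ℕ∞) (Phic n Φ) U := by
  have := Complex.ofRealCLM.contDiff.comp_contDiffOn (n := (⊤ : ℕ∞)) hΦ
  exact this.congr fun x _ => by simp [Phic, Function.comp]

theorem contDiffOn_gdn (hU : IsOpen U) (hΦ : ContDiffOn ℝ (⊤ : ℕ∞) Φ U) (s t : Fin n) :
    ContDiffOn ℝ (⊤ : ℕ∞) (gdn n Φ s t) U := by
  rw [gdn, wdP_eq, wdB_eq]
  exact contDiffOn_wop hU (contDiffOn_wop hU (contDiffOn_Phic hΦ))

/-- derivative of the inverse matrix -/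
theorem wop_inv (hU : IsOpen U) (hz : z ∈ U)
    (hg : ∀ l k, ContDiffOn ℝ (⊤ : ℕ∞) (ginv l k) U)
    (hΦ : ContDiffOn ℝ (⊤ : ℕ∞) Φ U)
    (hinv1 : ∀ z ∈ U, ∀ l q : Fin n,
      (∑ k, ginv l k z * gdn n Φ k q z) = if l = q then 1 else 0)
    (hinv2 : ∀ z ∈ U, ∀ p k : Fin n,
      (∑ l, gdn n Φ p l z * ginv l k z) = if p = k then 1 else 0)
    (q k : Fin n) :
    wop n a b v w (ginv q k) z
      = -∑ s, ∑ t, ginv q s z * (wop n a b v w (gdn n Φ s t) z * ginv t k z) := by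
  have hE : ∀ t, ∑ s, (wop n a b v w (ginv q s) z * gdn n Φ s t z
      + ginv q s z * wop n a b v w (gdn n Φ s t) z) = 0 := by
    intro t
    have h0 : wop n a b v w (fun y => ∑ s, ginv q s y * gdn n Φ s t y) z = 0 := by
      have hev : (fun y => ∑ s, ginv q s y * gdn n Φ s t y)
          =ᶠ[nhds z] (fun _ => if q = t then (1:ℂ) else 0) :=
        Filter.eventually_of_mem (hU.mem_nhds hz) (fun y hy => hinv1 y hy q t)
      rw [wop_congr hev, wop_const]
    rw [wop_sum Finset.univ (fun s y => ginv q s y * gdn n Φ s t y)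
      (fun s _ => (diffAt hU (hg q s) hz).mul (diffAt hU (contDiffOn_gdn hU hΦ s t) hz))] at h0
    calc ∑ s, (wop n a b v w (ginv q s) z * gdn n Φ s t z
          + ginv q s z * wop n a b v w (gdn n Φ s t) z)
        = ∑ s, wop n a b v w (fun y => ginv q s y * gdn n Φ s t y) z :=
          Finset.sum_congr rfl fun s _ => (wop_mul (diffAt hU (hg q s) hz)
            (diffAt hU (contDiffOn_gdn hU hΦ s t) hz)).symm
      _ = 0 := h0
  calc wop n a b v w (ginv q k) z
      = ∑ s, wop n a b v w (ginv q s) z * (if s = k then (1:ℂ) else 0) := by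
        rw [Finset.sum_eq_single_of_mem k (Finset.mem_univ k)
          (fun s _ hs => by rw [if_neg hs, mul_zero]), if_pos rfl, mul_one]
    _ = ∑ s, wop n a b v w (ginv q s) z * (∑ t, gdn n Φ s t z * ginv t k z) :=
        Finset.sum_congr rfl fun s _ => by rw [hinv2 z hz s k]
    _ = ∑ s, ∑ t, wop n a b v w (ginv q s) z * gdn n Φ s t z * ginv t k z := by
        refine Finset.sum_congr rfl fun s _ => ?_
        rw [Finset.mul_sum]
        exact Finset.sum_congr rfl fun t _ => by ring
    _ = ∑ t, (∑ s, wop n a b v w (ginv q s) z * gdn n Φ s t z) * ginv t k z := by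
        rw [Finset.sum_comm]
        exact Finset.sum_congr rfl fun t _ => (Finset.sum_mul _ _ _).symm
    _ = ∑ t, (-∑ s, ginv q s z * wop n a b v w (gdn n Φ s t) z) * ginv t k z := by
        refine Finset.sum_congr rfl fun t _ => ?_
        congr 1
        have h := hE t
        rw [Finset.sum_add_distrib] at h
        linear_combination h
    _ = ∑ t, ∑ s, -(ginv q s z * (wop n a b v w (gdn n Φ s t) z * ginv t k z)) := by
        refine Finset.sum_congr rfl fun t _ => ?_
        rw [neg_mul, Finset.sum_mul, ← Finset.sum_neg_distrib]
        exact Finset.sum_congr rfl fun s _ => by ring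
    _ = -∑ s, ∑ t, ginv q s z * (wop n a b v w (gdn n Φ s t) z * ginv t k z) := by
        rw [Finset.sum_comm]
        simp only [Finset.sum_neg_distrib]
end S13

namespace S13
variable {n : ℕ} {U : Set (Fin n → ℂ)} {z : Fin n → ℂ}
  {Φ : (Fin n → ℂ) → ℝ} {ginv : Fin n → Fin n → (Fin n → ℂ) → ℂ}

theorem wdP_inv (hU : IsOpen U) (hz : z ∈ U)
    (hg : ∀ l k, ContDiffOn ℝ (⊤ : ℕ∞) (ginv l k) U)
    (hΦ : ContDiffOn ℝ (⊤ : ℕ∞) Φ U)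
    (hinv1 : ∀ z ∈ U, ∀ l q : Fin n,
      (∑ k, ginv l k z * gdn n Φ k q z) = if l = q then 1 else 0)
    (hinv2 : ∀ z ∈ U, ∀ p k : Fin n,
      (∑ l, gdn n Φ p l z * ginv l k z) = if p = k then 1 else 0)
    (m q k : Fin n) :
    wdP n m (ginv q k) z
      = -∑ s, ∑ t, ginv q s z * (wdP n m (gdn n Φ s t) z * ginv t k z) := by
  simp only [wdP_eq]
  exact wop_inv hU hz hg hΦ hinv1 hinv2 q k

theorem wdB_inv (hU : IsOpen U) (hz : z ∈ U)
    (hg : ∀ l k, ContDiffOn ℝ (⊤ : ℕ∞) (ginv l k) U)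
    (hΦ : ContDiffOn ℝ (⊤ : ℕ∞) Φ U)
    (hinv1 : ∀ z ∈ U, ∀ l q : Fin n,
      (∑ k, ginv l k z * gdn n Φ k q z) = if l = q then 1 else 0)
    (hinv2 : ∀ z ∈ U, ∀ p k : Fin n,
      (∑ l, gdn n Φ p l z * ginv l k z) = if p = k then 1 else 0)
    (m q k : Fin n) :
    wdB n m (ginv q k) z
      = -∑ s, ∑ t, ginv q s z * (wdB n m (gdn n Φ s t) z * ginv t k z) := by
  simp only [wdB_eq]
  exact wop_inv hU hz hg hΦ hinv1 hinv2 q k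

/-- `∂_m g_{s t̄}` is symmetric in `m, s`. -/
theorem Sym1 (hU : IsOpen U) (hΦ : ContDiffOn ℝ (⊤ : ℕ∞) Φ U) (hz : z ∈ U)
    (m s t : Fin n) :
    wdP n m (gdn n Φ s t) z = wdP n s (gdn n Φ m t) z := by
  have hX : ContDiffOn ℝ (⊤ : ℕ∞) (wdB n t (Phic n Φ)) U := by
    rw [wdB_eq]; exact contDiffOn_wop hU (contDiffOn_Phic hΦ)
  simp only [gdn, wdP_eq]
  exact wop_comm hU hX hz

/-- `∂̄_m g_{s t̄}` is symmetric in `m, t`. -/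
theorem Sym2 (hU : IsOpen U) (hΦ : ContDiffOn ℝ (⊤ : ℕ∞) Φ U) (hz : z ∈ U)
    (m s t : Fin n) :
    wdB n m (gdn n Φ s t) z = wdB n t (gdn n Φ s m) z := by
  have hP : ContDiffOn ℝ (⊤ : ℕ∞) (Phic n Φ) U := contDiffOn_Phic hΦ
  have hBt : ContDiffOn ℝ (⊤ : ℕ∞)
      (wop n (1/2) (Complex.I/2) (ebasis n t) (Complex.I • ebasis n t) (Phic n Φ)) U :=
    contDiffOn_wop hU hP
  have hBm : ContDiffOn ℝ (⊤ : ℕ∞)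
      (wop n (1/2) (Complex.I/2) (ebasis n m) (Complex.I • ebasis n m) (Phic n Φ)) U :=
    contDiffOn_wop hU hP
  have step1 : wdB n m (gdn n Φ s t) z = wdP n s (wdB n m (wdB n t (Phic n Φ))) z := by
    simp only [gdn, wdP_eq, wdB_eq]
    exact wop_comm hU hBt hz
  have step2 : wdP n s (wdB n m (wdB n t (Phic n Φ))) z
      = wdP n s (wdB n t (wdB n m (Phic n Φ))) z := by
    have hev : wdB n m (wdB n t (Phic n Φ)) =ᶠ[nhds z] wdB n t (wdB n m (Phic n Φ)) := by
      refine Filter.eventually_of_mem (hU.mem_nhds hz) fun y hy => ?_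
      simp only [wdB_eq]
      exact wop_comm hU hP hy
    simp only [wdP_eq]
    exact wop_congr hev
  have step3 : wdB n t (gdn n Φ s m) z = wdP n s (wdB n t (wdB n m (Phic n Φ))) z := by
    simp only [gdn, wdP_eq, wdB_eq]
    exact wop_comm hU hBm hz
  rw [step1, step2, ← step3]

def sw13 {α : Type*} : (α × α × α) ≃ (α × α × α) :=
  ⟨fun r => (r.2.2, r.2.1, r.1), fun r => (r.2.2, r.2.1, r.1), fun r => rfl, fun r => rfl⟩

def sw12 {α : Type*} : (α × α × α) ≃ (α × α × α) :=
  ⟨fun r => (r.2.1, r.1, r.2.2), fun r => (r.2.1, r.1, r.2.2), fun r => rfl, fun r => rfl⟩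

theorem triple_merge (E : Fin n → Fin n → Fin n → ℂ) :
    ∑ r : Fin n × Fin n × Fin n, E r.1 r.2.1 r.2.2 = ∑ m, ∑ s, ∑ t, E m s t := by
  rw [Fintype.sum_prod_type]
  exact Finset.sum_congr rfl fun m _ => Fintype.sum_prod_type _

theorem K1 (hU : IsOpen U) (hz : z ∈ U)
    (hg : ∀ l k, ContDiffOn ℝ (⊤ : ℕ∞) (ginv l k) U)
    (hΦ : ContDiffOn ℝ (⊤ : ℕ∞) Φ U)
    (hinv1 : ∀ z ∈ U, ∀ l q : Fin n,
      (∑ k, ginv l k z * gdn n Φ k q z) = if l = q then 1 else 0)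
    (hinv2 : ∀ z ∈ U, ∀ p k : Fin n,
      (∑ l, gdn n Φ p l z * ginv l k z) = if p = k then 1 else 0)
    (k p l : Fin n) :
    ∑ m, ginv m k z * wdB n m (ginv l p) z = ∑ m, ginv m p z * wdB n m (ginv l k) z := by
  have expand : ∀ k' p' : Fin n, ∑ m, ginv m k' z * wdB n m (ginv l p') z
      = -∑ r : Fin n × Fin n × Fin n,
          ginv r.1 k' z * (ginv l r.2.1 z * (wdB n r.1 (gdn n Φ r.2.1 r.2.2) z * ginv r.2.2 p' z)) := by
    intro k' p'
    rw [triple_merge (fun m s t => ginv m k' z * (ginv l s z * (wdB n m (gdn n Φ s t) z * ginv t p' z)))]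
    rw [← Finset.sum_neg_distrib]
    refine Finset.sum_congr rfl fun m _ => ?_
    rw [wdB_inv hU hz hg hΦ hinv1 hinv2 m l p']
    simp only [mul_neg, Finset.mul_sum]
  rw [expand k p, expand p k]
  congr 1
  have h2 : (∑ r : Fin n × Fin n × Fin n,
      ginv r.1 p z * (ginv l r.2.1 z * (wdB n r.1 (gdn n Φ r.2.1 r.2.2) z * ginv r.2.2 k z)))
      = ∑ r : Fin n × Fin n × Fin n, (fun r : Fin n × Fin n × Fin n =>
          ginv r.1 p z * (ginv l r.2.1 z * (wdB n r.1 (gdn n Φ r.2.1 r.2.2) z * ginv r.2.2 k z)))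
        (sw13 r) :=
    (Equiv.sum_comp sw13 _).symm
  rw [h2]
  refine Finset.sum_congr rfl fun r _ => ?_
  obtain ⟨m, s, t⟩ := r
  simp only [sw13, Equiv.coe_fn_mk]
  rw [Sym2 hU hΦ hz t s m]
  ring

theorem K2 (hU : IsOpen U) (hz : z ∈ U)
    (hg : ∀ l k, ContDiffOn ℝ (⊤ : ℕ∞) (ginv l k) U)
    (hΦ : ContDiffOn ℝ (⊤ : ℕ∞) Φ U)
    (hinv1 : ∀ z ∈ U, ∀ l q : Fin n,
      (∑ k, ginv l k z * gdn n Φ k q z) = if l = q then 1 else 0)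
    (hinv2 : ∀ z ∈ U, ∀ p k : Fin n,
      (∑ l, gdn n Φ p l z * ginv l k z) = if p = k then 1 else 0)
    (l q k : Fin n) :
    ∑ m, ginv l m z * wdP n m (ginv q k) z = ∑ m, ginv q m z * wdP n m (ginv l k) z := by
  have expand : ∀ l' q' : Fin n, ∑ m, ginv l' m z * wdP n m (ginv q' k) z
      = -∑ r : Fin n × Fin n × Fin n,
          ginv l' r.1 z * (ginv q' r.2.1 z * (wdP n r.1 (gdn n Φ r.2.1 r.2.2) z * ginv r.2.2 k z)) := by
    intro l' q'
    rw [triple_merge (fun m s t => ginv l' m z * (ginv q' s z * (wdP n m (gdn n Φ s t) z * ginv t k z)))]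
    rw [← Finset.sum_neg_distrib]
    refine Finset.sum_congr rfl fun m _ => ?_
    rw [wdP_inv hU hz hg hΦ hinv1 hinv2 m q' k]
    simp only [mul_neg, Finset.mul_sum]
  rw [expand l q, expand q l]
  congr 1
  have h2 : (∑ r : Fin n × Fin n × Fin n,
      ginv q r.1 z * (ginv l r.2.1 z * (wdP n r.1 (gdn n Φ r.2.1 r.2.2) z * ginv r.2.2 k z)))
      = ∑ r : Fin n × Fin n × Fin n, (fun r : Fin n × Fin n × Fin n =>
          ginv q r.1 z * (ginv l r.2.1 z * (wdP n r.1 (gdn n Φ r.2.1 r.2.2) z * ginv r.2.2 k z)))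
        (sw12 r) :=
    (Equiv.sum_comp sw12 _).symm
  rw [h2]
  refine Finset.sum_congr rfl fun r _ => ?_
  obtain ⟨m, s, t⟩ := r
  simp only [sw12, Equiv.coe_fn_mk]
  rw [Sym1 hU hΦ hz s m t]
  ring
end S13

namespace S13
variable {n : ℕ} {U : Set (Fin n → ℂ)} {z : Fin n → ℂ}
  {Φ : (Fin n → ℂ) → ℝ} {ginv : Fin n → Fin n → (Fin n → ℂ) → ℂ}

theorem cyc (hU : IsOpen U) (hz : z ∈ U)
    (hg : ∀ l k, ContDiffOn ℝ (⊤ : ℕ∞) (ginv l k) U)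
    (hΦ : ContDiffOn ℝ (⊤ : ℕ∞) Φ U)
    (hinv1 : ∀ z ∈ U, ∀ l q : Fin n,
      (∑ k, ginv l k z * gdn n Φ k q z) = if l = q then 1 else 0)
    (hinv2 : ∀ z ∈ U, ∀ p k : Fin n,
      (∑ l, gdn n Φ p l z * ginv l k z) = if p = k then 1 else 0)
    (A B C : Fin n ⊕ Fin n) :
    ∑ e : Fin n ⊕ Fin n, (Lam n ginv A e z * DD n e (Lam n ginv B C) z
      + Lam n ginv B e z * DD n e (Lam n ginv C A) z
      + Lam n ginv C e z * DD n e (Lam n ginv A B) z) = 0 := by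
  have hdg : ∀ l k, DifferentiableAt ℝ (ginv l k) z := fun l k => diffAt hU (hg l k) hz
  have hDDlr : ∀ (e : Fin n ⊕ Fin n) (l k : Fin n),
      DD n e (fun y => Complex.I * ginv l k y) z = Complex.I * DD n e (ginv l k) z :=
    fun e l k => DD_const_mul e (hdg l k) _
  have hDDrl : ∀ (e : Fin n ⊕ Fin n) (l k : Fin n),
      DD n e (fun y => (-Complex.I) * ginv l k y) z = (-Complex.I) * DD n e (ginv l k) z :=
    fun e l k => DD_const_mul e (hdg l k) _
  rcases A with k | k <;> rcases B with p | p <;> rcases C with l | l <;>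
    rw [Fintype.sum_sum_type] <;>
    simp only [Lam_ll, Lam_lr, Lam_rl, Lam_rr, DD_const, hDDlr, hDDrl, DD_inl, DD_inr,
      zero_mul, mul_zero, add_zero, zero_add, Finset.sum_const_zero]
  -- case inl.inl.inr
  · have hK := K1 hU hz hg hΦ hinv1 hinv2 k p l
    have hpt : ∀ x : Fin n, Complex.I * ginv x k z * (Complex.I * wdB n x (ginv l p) z)
        + Complex.I * ginv x p z * (-Complex.I * wdB n x (ginv l k) z)
        = ginv x p z * wdB n x (ginv l k) z - ginv x k z * wdB n x (ginv l p) z := fun x => by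
      linear_combination (ginv x k z * wdB n x (ginv l p) z
        - ginv x p z * wdB n x (ginv l k) z) * Complex.I_sq
    rw [Finset.sum_congr rfl fun x _ => hpt x, Finset.sum_sub_distrib, hK, sub_self]
  -- case inl.inr.inl
  · have hK := K1 hU hz hg hΦ hinv1 hinv2 k l p
    have hpt : ∀ x : Fin n, Complex.I * ginv x k z * (-Complex.I * wdB n x (ginv p l) z)
        + Complex.I * ginv x l z * (Complex.I * wdB n x (ginv p k) z)
        = ginv x k z * wdB n x (ginv p l) z - ginv x l z * wdB n x (ginv p k) z := fun x => by
      linear_combination (ginv x l z * wdB n x (ginv p k) z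
        - ginv x k z * wdB n x (ginv p l) z) * Complex.I_sq
    rw [Finset.sum_congr rfl fun x _ => hpt x, Finset.sum_sub_distrib, hK, sub_self]
  -- case inl.inr.inr
  · have hK := K2 hU hz hg hΦ hinv1 hinv2 p l k
    have hpt : ∀ x : Fin n, -Complex.I * ginv p x z * (-Complex.I * wdP n x (ginv l k) z)
        + -Complex.I * ginv l x z * (Complex.I * wdP n x (ginv p k) z)
        = ginv l x z * wdP n x (ginv p k) z - ginv p x z * wdP n x (ginv l k) z := fun x => by
      linear_combination (ginv p x z * wdP n x (ginv l k) z
        - ginv l x z * wdP n x (ginv p k) z) * Complex.I_sq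
    rw [Finset.sum_congr rfl fun x _ => hpt x, Finset.sum_sub_distrib, ← hK, sub_self]
  -- case inr.inl.inl
  · have hK := K1 hU hz hg hΦ hinv1 hinv2 p l k
    have hpt : ∀ x : Fin n, Complex.I * ginv x p z * (Complex.I * wdB n x (ginv k l) z)
        + Complex.I * ginv x l z * (-Complex.I * wdB n x (ginv k p) z)
        = ginv x l z * wdB n x (ginv k p) z - ginv x p z * wdB n x (ginv k l) z := fun x => by
      linear_combination (ginv x p z * wdB n x (ginv k l) z
        - ginv x l z * wdB n x (ginv k p) z) * Complex.I_sq
    rw [Finset.sum_congr rfl fun x _ => hpt x, Finset.sum_sub_distrib, hK, sub_self]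
  -- case inr.inl.inr
  · have hK := K2 hU hz hg hΦ hinv1 hinv2 k l p
    have hpt : ∀ x : Fin n, -Complex.I * ginv k x z * (Complex.I * wdP n x (ginv l p) z)
        + -Complex.I * ginv l x z * (-Complex.I * wdP n x (ginv k p) z)
        = ginv k x z * wdP n x (ginv l p) z - ginv l x z * wdP n x (ginv k p) z := fun x => by
      linear_combination (ginv l x z * wdP n x (ginv k p) z
        - ginv k x z * wdP n x (ginv l p) z) * Complex.I_sq
    rw [Finset.sum_congr rfl fun x _ => hpt x, Finset.sum_sub_distrib, hK, sub_self]
  -- case inr.inr.inl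
  · have hK := K2 hU hz hg hΦ hinv1 hinv2 k p l
    have hpt : ∀ x : Fin n, -Complex.I * ginv k x z * (-Complex.I * wdP n x (ginv p l) z)
        + -Complex.I * ginv p x z * (Complex.I * wdP n x (ginv k l) z)
        = ginv p x z * wdP n x (ginv k l) z - ginv k x z * wdP n x (ginv p l) z := fun x => by
      linear_combination (ginv k x z * wdP n x (ginv p l) z
        - ginv p x z * wdP n x (ginv k l) z) * Complex.I_sq
    rw [Finset.sum_congr rfl fun x _ => hpt x, Finset.sum_sub_distrib, ← hK, sub_self]
end S13


open S13 in
/-- the bivector field `η = i g^{l̄k} ∂_k ∧ ∂̄_l` is Poisson: the bracket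
satisfies the Jacobi identity on `U`. -/
theorem stmt_13 (n : ℕ) (hn : 1 ≤ n) (U : Set (Fin n → ℂ)) (hU : IsOpen U)
    (Φ : (Fin n → ℂ) → ℝ) (hΦ : ContDiffOn ℝ (⊤ : ℕ∞) Φ U)
    (ginv : Fin n → Fin n → (Fin n → ℂ) → ℂ)
    (hginv : ∀ l k : Fin n, ContDiffOn ℝ (⊤ : ℕ∞) (ginv l k) U)
    (hinv1 : ∀ z ∈ U, ∀ l q : Fin n,
      (∑ k, ginv l k z * gdn n Φ k q z) = if l = q then 1 else 0)
    (hinv2 : ∀ z ∈ U, ∀ p k : Fin n,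
      (∑ l, gdn n Φ p l z * ginv l k z) = if p = k then 1 else 0) :
    ∀ f g h : (Fin n → ℂ) → ℂ,
      ContDiffOn ℝ (⊤ : ℕ∞) f U → ContDiffOn ℝ (⊤ : ℕ∞) g U → ContDiffOn ℝ (⊤ : ℕ∞) h U →
      ∀ z ∈ U,
        pb n ginv f (pb n ginv g h) z + pb n ginv g (pb n ginv h f) z
          + pb n ginv h (pb n ginv f g) z = 0 := by
  intro f g h hf0 hg0 hh0 z hz
  have hf : ContDiffOn ℝ (⊤ : ℕ∞) f U := hf0.of_le (by simp)
  have hg : ContDiffOn ℝ (⊤ : ℕ∞) g U := hg0.of_le (by simp)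
  have hh : ContDiffOn ℝ (⊤ : ℕ∞) h U := hh0.of_le (by simp)
  have hΦ' : ContDiffOn ℝ (⊤ : ℕ∞) Φ U := hΦ.of_le (by simp)
  have hginv' : ∀ l k, ContDiffOn ℝ (⊤ : ℕ∞) (ginv l k) U :=
    fun l k => (hginv l k).of_le (by simp)
  have key : ∀ (f₁ g₁ h₁ : (Fin n → ℂ) → ℂ),
      ContDiffOn ℝ (⊤ : ℕ∞) f₁ U → ContDiffOn ℝ (⊤ : ℕ∞) g₁ U →
      ContDiffOn ℝ (⊤ : ℕ∞) h₁ U →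
      pb n ginv f₁ (pb n ginv g₁ h₁) z
        = Jp (fun a b => Lam n ginv a b z) (fun e c d => DD n e (Lam n ginv c d) z)
            (fun a => DD n a f₁ z) (fun a => DD n a g₁ z) (fun a => DD n a h₁ z)
            (fun a c => DD n a (DD n c g₁) z) (fun a d => DD n a (DD n d h₁) z) := by
    intro f₁ g₁ h₁ hf₁ hg₁ hh₁
    have hpp := congrFun (pb_eq (ginv := ginv) f₁ (pb n ginv g₁ h₁)) z
    rw [hpp]
    unfold Jp
    refine Finset.sum_congr rfl fun p _ => ?_
    rw [DD_pb hU hz hginv' hg₁ hh₁ p.2]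
  rw [key f g h hf hg hh, key g h f hg hh hf, key h f g hh hf hg]
  have hL : ∀ a b : Fin n ⊕ Fin n, Lam n ginv b a z = -Lam n ginv a b z := by
    intro a b
    rcases a with k | k <;> rcases b with p | p <;>
      simp only [Lam_ll, Lam_lr, Lam_rl, Lam_rr] <;> ring
  exact jacobi_alg _ _ _ _ _ _ _ _ hL
    (fun a b => DD_comm hU hf hz a b)
    (fun a b => DD_comm hU hg hz a b)
    (fun a b => DD_comm hU hh hz a b)
    (cyc hU hz hginv' hΦ' hinv1 hinv2)
end
end

section
/- Consistency of the two curvature formulas: for all indices q, p, k, l ∈ {1,…,n} one has on U: ∂_k ∂̄_l g^{q̄p} − Σ_{m,n} (∂̄_l g^{q̄m})(∂_k g^{n̄p}) g_{mn̄} = Σ_{a,b} g^{q̄a} g^{b̄p} R_{ab̄kl̄}, where R_{ab̄kl̄} = Σ_{m,n} g^{n̄m} g_{mb̄l̄} g_{akn̄} − g_{ab̄kl̄}. That is, the tensor R^{q̄p}_{kl̄} of equation (E:curvup) is obtained from the tensor R_{pq̄kl̄} of equation (E:curvdn) by raising indices with g^{·}. -/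
open scoped BigOperators

noncomputable section

/-- The curvature tensor with lower indices:
`R_{a b̄ k l̄} = Σ_{m,n} g^{n̄m} g_{m b̄ l̄} g_{a k n̄} - g_{a b̄ k l̄}`. -/
def Rdn (n : ℕ) (Φ : (Fin n → ℂ) → ℝ) (ginv : Fin n → Fin n → (Fin n → ℂ) → ℂ)
    (a b k l : Fin n) : (Fin n → ℂ) → ℂ :=
  fun z => (∑ m, ∑ m', ginv m' m z * g3a n Φ m b l z * g3h n Φ a k m' z) - g4 n Φ a b k l z


namespace S14

open Complex Filter

variable {n : ℕ}

abbrev Fn (n : ℕ) := (Fin n → ℂ) → ℂ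

def Dd (v : Fin n → ℂ) (f : Fn n) : Fn n := fun z => fderiv ℝ f z v

lemma top_le : ((⊤:ℕ∞) : WithTop ℕ∞) + 1 ≤ ((⊤:ℕ∞) : WithTop ℕ∞) := by
  norm_num

lemma two_le : (2 : WithTop ℕ∞) ≤ ((⊤:ℕ∞) : WithTop ℕ∞) := by
  rw [show (2 : WithTop ℕ∞) = ((2:ℕ∞) : WithTop ℕ∞) by rfl]
  exact_mod_cast le_top

lemma one_le : (1 : WithTop ℕ∞) ≤ ((⊤:ℕ∞) : WithTop ℕ∞) := by
  rw [show (1 : WithTop ℕ∞) = ((1:ℕ∞) : WithTop ℕ∞) by rfl]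
  exact_mod_cast le_top

lemma smoothAt_Dd {f : Fn n} {z : Fin n → ℂ} (hf : ContDiffAt ℝ (⊤:ℕ∞) f z) (v : Fin n → ℂ) :
    ContDiffAt ℝ (⊤:ℕ∞) (Dd v f) z := by
  have h1 : ContDiffAt ℝ (⊤:ℕ∞) (fderiv ℝ f) z := hf.fderiv_right top_le
  exact h1.clm_apply contDiffAt_const

lemma Dd_congr {f g : Fn n} {z : Fin n → ℂ} (h : f =ᶠ[nhds z] g) (v : Fin n → ℂ) :
    Dd v f z = Dd v g z := by
  unfold Dd; rw [h.fderiv_eq]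

lemma Dd_const (c : ℂ) (v : Fin n → ℂ) (z : Fin n → ℂ) : Dd v (fun _ => c) z = 0 := by
  simp [Dd]

lemma Dd_add {f g : Fn n} {z : Fin n → ℂ} (hf : DifferentiableAt ℝ f z)
    (hg : DifferentiableAt ℝ g z) (v : Fin n → ℂ) :
    Dd v (fun w => f w + g w) z = Dd v f z + Dd v g z := by
  simp [Dd, fderiv_fun_add hf hg]

lemma Dd_const_mul {f : Fn n} {z : Fin n → ℂ} (hf : DifferentiableAt ℝ f z) (c : ℂ)
    (v : Fin n → ℂ) :
    Dd v (fun w => c * f w) z = c * Dd v f z := by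
  simp [Dd, fderiv_const_mul hf c]

lemma Dd_mul {f g : Fn n} {z : Fin n → ℂ} (hf : DifferentiableAt ℝ f z)
    (hg : DifferentiableAt ℝ g z) (v : Fin n → ℂ) :
    Dd v (fun w => f w * g w) z = Dd v f z * g z + f z * Dd v g z := by
  simp [Dd, fderiv_fun_mul hf hg]
  ring

lemma Dd_sum {ι : Type*} (s : Finset ι) (F : ι → Fn n) {z : Fin n → ℂ}
    (h : ∀ i ∈ s, DifferentiableAt ℝ (F i) z) (v : Fin n → ℂ) :
    Dd v (fun w => ∑ i ∈ s, F i w) z = ∑ i ∈ s, Dd v (F i) z := by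
  simp [Dd, fderiv_fun_sum h]

lemma Dd_comm {f : Fn n} {z : Fin n → ℂ} (hf : ContDiffAt ℝ (⊤:ℕ∞) f z) (v w : Fin n → ℂ) :
    Dd v (Dd w f) z = Dd w (Dd v f) z := by
  have hd : DifferentiableAt ℝ (fderiv ℝ f) z :=
    (hf.fderiv_right top_le).differentiableAt (by simp)
  have h1 : ∀ u x, Dd u (Dd x f) z = fderiv ℝ (fderiv ℝ f) z u x := by
    intro u x
    unfold Dd
    rw [fderiv_clm_apply hd (differentiableAt_const x)]
    simp
  rw [h1, h1]
  exact (hf.isSymmSndFDerivAt (by rw [minSmoothness_of_isRCLikeNormedField]; exact two_le)) v w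


/-- generic linear combination of two directional derivatives -/
def wgen (a b : ℂ) (v w : Fin n → ℂ) (f : Fn n) : Fn n :=
  fun z => a * Dd v f z + b * Dd w f z

lemma diffAt_of_smoothAt {f : Fn n} {z : Fin n → ℂ} (hf : ContDiffAt ℝ (⊤:ℕ∞) f z) :
    DifferentiableAt ℝ f z := hf.differentiableAt (by simp)

lemma smoothAt_wgen {f : Fn n} {z : Fin n → ℂ} (hf : ContDiffAt ℝ (⊤:ℕ∞) f z)
    (a b : ℂ) (v w : Fin n → ℂ) : ContDiffAt ℝ (⊤:ℕ∞) (wgen a b v w f) z :=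
  (contDiffAt_const.mul (smoothAt_Dd hf v)).add (contDiffAt_const.mul (smoothAt_Dd hf w))

lemma wgen_congr {f g : Fn n} {z : Fin n → ℂ} (h : f =ᶠ[nhds z] g)
    (a b : ℂ) (v w : Fin n → ℂ) : wgen a b v w f z = wgen a b v w g z := by
  unfold wgen; rw [Dd_congr h, Dd_congr h]

lemma wgen_const (c a b : ℂ) (v w : Fin n → ℂ) (z : Fin n → ℂ) :
    wgen a b v w (fun _ => c) z = 0 := by
  simp [wgen, Dd_const]

lemma wgen_mul {f g : Fn n} {z : Fin n → ℂ} (hf : DifferentiableAt ℝ f z)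
    (hg : DifferentiableAt ℝ g z) (a b : ℂ) (v w : Fin n → ℂ) :
    wgen a b v w (fun y => f y * g y) z
      = wgen a b v w f z * g z + f z * wgen a b v w g z := by
  unfold wgen; rw [Dd_mul hf hg, Dd_mul hf hg]; ring

lemma wgen_sum {ι : Type*} (s : Finset ι) (F : ι → Fn n) {z : Fin n → ℂ}
    (h : ∀ i ∈ s, DifferentiableAt ℝ (F i) z) (a b : ℂ) (v w : Fin n → ℂ) :
    wgen a b v w (fun y => ∑ i ∈ s, F i y) z = ∑ i ∈ s, wgen a b v w (F i) z := by
  unfold wgen; rw [Dd_sum s F h, Dd_sum s F h, Finset.mul_sum, Finset.mul_sum,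
    ← Finset.sum_add_distrib]

lemma Dd_wgen {f : Fn n} {z : Fin n → ℂ} (hf : ContDiffAt ℝ (⊤:ℕ∞) f z)
    (a b : ℂ) (v w u : Fin n → ℂ) :
    Dd u (wgen a b v w f) z = a * Dd u (Dd v f) z + b * Dd u (Dd w f) z := by
  unfold wgen
  rw [Dd_add ((diffAt_of_smoothAt (smoothAt_Dd hf v)).const_mul a)
      ((diffAt_of_smoothAt (smoothAt_Dd hf w)).const_mul b),
    Dd_const_mul (diffAt_of_smoothAt (smoothAt_Dd hf v)),
    Dd_const_mul (diffAt_of_smoothAt (smoothAt_Dd hf w))]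

lemma wgen_comm {f : Fn n} {z : Fin n → ℂ} (hf : ContDiffAt ℝ (⊤:ℕ∞) f z)
    (a b a' b' : ℂ) (v w v' w' : Fin n → ℂ) :
    wgen a b v w (wgen a' b' v' w' f) z = wgen a' b' v' w' (wgen a b v w f) z := by
  show a * Dd v (wgen a' b' v' w' f) z + b * Dd w (wgen a' b' v' w' f) z
     = a' * Dd v' (wgen a b v w f) z + b' * Dd w' (wgen a b v w f) z
  rw [Dd_wgen hf, Dd_wgen hf, Dd_wgen hf, Dd_wgen hf,
    Dd_comm hf v v', Dd_comm hf v w', Dd_comm hf w v', Dd_comm hf w w']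
  ring


lemma wgen_add {f g : Fn n} {z : Fin n → ℂ} (hf : DifferentiableAt ℝ f z)
    (hg : DifferentiableAt ℝ g z) (a b : ℂ) (v w : Fin n → ℂ) :
    wgen a b v w (fun y => f y + g y) z = wgen a b v w f z + wgen a b v w g z := by
  unfold wgen; rw [Dd_add hf hg, Dd_add hf hg]; ring

lemma wdP_eq (k : Fin n) (f : Fn n) :
    wdP n k f = wgen (1/2) (-(1/2)*Complex.I) (ebasis n k) (Complex.I • ebasis n k) f := by
  funext z; simp only [wdP, wgen, Dd]; ring

lemma wdB_eq (k : Fin n) (f : Fn n) :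
    wdB n k f = wgen (1/2) ((1/2)*Complex.I) (ebasis n k) (Complex.I • ebasis n k) f := by
  funext z; simp only [wdB, wgen, Dd]; ring

lemma smoothAt_wdP {f : Fn n} {z : Fin n → ℂ} (hf : ContDiffAt ℝ (⊤:ℕ∞) f z) (k : Fin n) :
    ContDiffAt ℝ (⊤:ℕ∞) (wdP n k f) z := by rw [wdP_eq]; exact smoothAt_wgen hf _ _ _ _

lemma smoothAt_wdB {f : Fn n} {z : Fin n → ℂ} (hf : ContDiffAt ℝ (⊤:ℕ∞) f z) (k : Fin n) :
    ContDiffAt ℝ (⊤:ℕ∞) (wdB n k f) z := by rw [wdB_eq]; exact smoothAt_wgen hf _ _ _ _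

variable {U : Set (Fin n → ℂ)}

lemma wdP_congrU (hU : IsOpen U) {f g : Fn n} (h : ∀ y ∈ U, f y = g y) {z : Fin n → ℂ}
    (hz : z ∈ U) (k : Fin n) : wdP n k f z = wdP n k g z := by
  rw [wdP_eq, wdP_eq]
  exact wgen_congr (Filter.eventuallyEq_of_mem (hU.mem_nhds hz) h) _ _ _ _

lemma wdB_congrU (hU : IsOpen U) {f g : Fn n} (h : ∀ y ∈ U, f y = g y) {z : Fin n → ℂ}
    (hz : z ∈ U) (k : Fin n) : wdB n k f z = wdB n k g z := by
  rw [wdB_eq, wdB_eq]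
  exact wgen_congr (Filter.eventuallyEq_of_mem (hU.mem_nhds hz) h) _ _ _ _

lemma wdP_const (c : ℂ) (k : Fin n) (z : Fin n → ℂ) : wdP n k (fun _ => c) z = 0 := by
  rw [wdP_eq]; exact wgen_const c _ _ _ _ _

lemma wdB_const (c : ℂ) (k : Fin n) (z : Fin n → ℂ) : wdB n k (fun _ => c) z = 0 := by
  rw [wdB_eq]; exact wgen_const c _ _ _ _ _

lemma wdP_mul {f g : Fn n} {z : Fin n → ℂ} (hf : DifferentiableAt ℝ f z)
    (hg : DifferentiableAt ℝ g z) (k : Fin n) :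
    wdP n k (fun y => f y * g y) z = wdP n k f z * g z + f z * wdP n k g z := by
  rw [wdP_eq, wdP_eq, wdP_eq]; exact wgen_mul hf hg _ _ _ _

lemma wdB_mul {f g : Fn n} {z : Fin n → ℂ} (hf : DifferentiableAt ℝ f z)
    (hg : DifferentiableAt ℝ g z) (k : Fin n) :
    wdB n k (fun y => f y * g y) z = wdB n k f z * g z + f z * wdB n k g z := by
  rw [wdB_eq, wdB_eq, wdB_eq]; exact wgen_mul hf hg _ _ _ _

lemma wdP_add {f g : Fn n} {z : Fin n → ℂ} (hf : DifferentiableAt ℝ f z)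
    (hg : DifferentiableAt ℝ g z) (k : Fin n) :
    wdP n k (fun y => f y + g y) z = wdP n k f z + wdP n k g z := by
  rw [wdP_eq, wdP_eq, wdP_eq]; exact wgen_add hf hg _ _ _ _

lemma wdB_add {f g : Fn n} {z : Fin n → ℂ} (hf : DifferentiableAt ℝ f z)
    (hg : DifferentiableAt ℝ g z) (k : Fin n) :
    wdB n k (fun y => f y + g y) z = wdB n k f z + wdB n k g z := by
  rw [wdB_eq, wdB_eq, wdB_eq]; exact wgen_add hf hg _ _ _ _

lemma wdP_sum {ι : Type*} (s : Finset ι) (F : ι → Fn n) {z : Fin n → ℂ}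
    (h : ∀ i ∈ s, DifferentiableAt ℝ (F i) z) (k : Fin n) :
    wdP n k (fun y => ∑ i ∈ s, F i y) z = ∑ i ∈ s, wdP n k (F i) z := by
  rw [wdP_eq]
  rw [wgen_sum s F h]
  exact Finset.sum_congr rfl fun i _ => by rw [wdP_eq]

lemma wdB_sum {ι : Type*} (s : Finset ι) (F : ι → Fn n) {z : Fin n → ℂ}
    (h : ∀ i ∈ s, DifferentiableAt ℝ (F i) z) (k : Fin n) :
    wdB n k (fun y => ∑ i ∈ s, F i y) z = ∑ i ∈ s, wdB n k (F i) z := by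
  rw [wdB_eq]
  rw [wgen_sum s F h]
  exact Finset.sum_congr rfl fun i _ => by rw [wdB_eq]

lemma wdP_wdB {f : Fn n} {z : Fin n → ℂ} (hf : ContDiffAt ℝ (⊤:ℕ∞) f z) (k l : Fin n) :
    wdP n k (wdB n l f) z = wdB n l (wdP n k f) z := by
  rw [wdP_eq, wdB_eq, wdB_eq, wdP_eq]; exact wgen_comm hf _ _ _ _ _ _ _ _

lemma wdP_wdP {f : Fn n} {z : Fin n → ℂ} (hf : ContDiffAt ℝ (⊤:ℕ∞) f z) (k l : Fin n) :
    wdP n k (wdP n l f) z = wdP n l (wdP n k f) z := by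
  rw [wdP_eq, wdP_eq (f := f), wdP_eq l, wdP_eq k f]; exact wgen_comm hf _ _ _ _ _ _ _ _

lemma wdB_wdB {f : Fn n} {z : Fin n → ℂ} (hf : ContDiffAt ℝ (⊤:ℕ∞) f z) (k l : Fin n) :
    wdB n k (wdB n l f) z = wdB n l (wdB n k f) z := by
  rw [wdB_eq, wdB_eq (f := f), wdB_eq l, wdB_eq k f]; exact wgen_comm hf _ _ _ _ _ _ _ _

end S14

section Main
open S14

/-- consistency of the two curvature formulas: on `U`,
`∂_k ∂̄_l g^{q̄p} - Σ (∂̄_l g^{q̄m})(∂_k g^{n̄p}) g_{mn̄} = Σ_{a,b} g^{q̄a} g^{b̄p} R_{a b̄ k l̄}`. -/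
theorem stmt_14 (n : ℕ) (hn : 1 ≤ n) (U : Set (Fin n → ℂ)) (hU : IsOpen U)
    (Φ : (Fin n → ℂ) → ℝ) (hΦ : ContDiffOn ℝ (⊤ : ℕ∞) Φ U)
    (ginv : Fin n → Fin n → (Fin n → ℂ) → ℂ)
    (hginv : ∀ l k : Fin n, ContDiffOn ℝ (⊤ : ℕ∞) (ginv l k) U)
    (hinv1 : ∀ z ∈ U, ∀ l q : Fin n,
      (∑ k, ginv l k z * gdn n Φ k q z) = if l = q then 1 else 0)
    (hinv2 : ∀ z ∈ U, ∀ p k : Fin n,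
      (∑ l, gdn n Φ p l z * ginv l k z) = if p = k then 1 else 0) :
    ∀ z ∈ U, ∀ q p k l : Fin n,
      wdP n k (wdB n l (ginv q p)) z
          - (∑ m, ∑ m', wdB n l (ginv q m) z * wdP n k (ginv m' p) z * gdn n Φ m m' z)
        = ∑ a, ∑ b, ginv q a z * ginv b p z * Rdn n Φ ginv a b k l z := by
  classical
  intro z hz q p k l
  -- smoothness of the potential (as complex valued function) on U
  have hΦc : ∀ w ∈ U, ContDiffAt ℝ (⊤:ℕ∞) (Phic n Φ) w := by
    intro w hw
    have h1 : ContDiffAt ℝ (⊤:ℕ∞) Φ w := (hΦ.of_le (by simp)).contDiffAt (hU.mem_nhds hw)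
    exact (Complex.ofRealCLM.contDiff.contDiffAt).comp w h1
  have hgsm : ∀ a b : Fin n, ∀ w ∈ U, ContDiffAt ℝ (⊤:ℕ∞) (ginv a b) w :=
    fun a b w hw => ((hginv a b).of_le (by simp)).contDiffAt (hU.mem_nhds hw)
  have hgdn : ∀ a b : Fin n, ∀ w ∈ U, ContDiffAt ℝ (⊤:ℕ∞) (gdn n Φ a b) w := by
    intro a b w hw
    exact smoothAt_wdP (smoothAt_wdB (hΦc w hw) b) a
  -- identifications of mixed derivatives
  have hQid : ∀ c a : Fin n, ∀ w ∈ U, wdB n l (gdn n Φ c a) w = g3a n Φ c a l w := by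
    intro c a w hw
    have h1 : wdB n l (gdn n Φ c a) w = wdP n c (wdB n l (wdB n a (Phic n Φ))) w := by
      rw [gdn]; exact (wdP_wdB (smoothAt_wdB (hΦc w hw) a) c l).symm
    have h2 : ∀ y ∈ U, wdB n l (wdB n a (Phic n Φ)) y = wdB n a (wdB n l (Phic n Φ)) y :=
      fun y hy => wdB_wdB (hΦc y hy) l a
    rw [h1, g3a]
    exact wdP_congrU hU h2 hw c
  have hPid : ∀ c b : Fin n, ∀ w ∈ U, wdP n k (gdn n Φ c b) w = g3h n Φ c k b w := by
    intro c b w hw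
    rw [gdn, g3h]
    exact wdP_wdP (smoothAt_wdB (hΦc w hw) b) k c
  have hSid : ∀ c a : Fin n, ∀ w ∈ U, wdP n k (wdB n l (gdn n Φ c a)) w = g4 n Φ c a k l w := by
    intro c a w hw
    have h1 : wdP n k (wdB n l (gdn n Φ c a)) w = wdP n k (g3a n Φ c a l) w :=
      wdP_congrU hU (fun y hy => hQid c a y hy) hw k
    rw [h1, g3a, g4]
    exact wdP_wdP (smoothAt_wdB (smoothAt_wdB (hΦc w hw) l) a) k c
  -- differentiability helpers
  have dgi : ∀ a b : Fin n, ∀ w ∈ U, DifferentiableAt ℝ (ginv a b) w :=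
    fun a b w hw => diffAt_of_smoothAt (hgsm a b w hw)
  have dgd : ∀ a b : Fin n, ∀ w ∈ U, DifferentiableAt ℝ (gdn n Φ a b) w :=
    fun a b w hw => diffAt_of_smoothAt (hgdn a b w hw)
  have dwBgi : ∀ a b : Fin n, ∀ w ∈ U, DifferentiableAt ℝ (wdB n l (ginv a b)) w :=
    fun a b w hw => diffAt_of_smoothAt (smoothAt_wdB (hgsm a b w hw) l)
  have dwBgd : ∀ a b : Fin n, ∀ w ∈ U, DifferentiableAt ℝ (wdB n l (gdn n Φ a b)) w :=
    fun a b w hw => diffAt_of_smoothAt (smoothAt_wdB (hgdn a b w hw) l)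
  -- first derivatives of the inverse relation
  have hF2 : ∀ r a : Fin n, ∀ w ∈ U,
      (∑ c, (wdB n l (ginv r c) w * gdn n Φ c a w + ginv r c w * wdB n l (gdn n Φ c a) w))
        = 0 := by
    intro r a w hw
    have h0 : wdB n l (fun y => ∑ c, ginv r c y * gdn n Φ c a y) w = 0 := by
      rw [wdB_congrU hU (fun y hy => hinv1 y hy r a) hw, wdB_const]
    have h1 : wdB n l (fun y => ∑ c, ginv r c y * gdn n Φ c a y) w
        = ∑ c, wdB n l (fun y => ginv r c y * gdn n Φ c a y) w :=
      wdB_sum Finset.univ (fun c y => ginv r c y * gdn n Φ c a y)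
        (fun c _ => (dgi r c w hw).mul (dgd c a w hw)) l
    rw [h1] at h0
    rw [← h0]
    exact Finset.sum_congr rfl fun c _ => (wdB_mul (dgi r c w hw) (dgd c a w hw) l).symm
  have hF3 : ∀ r a : Fin n, ∀ w ∈ U,
      (∑ c, (wdP n k (ginv r c) w * gdn n Φ c a w + ginv r c w * wdP n k (gdn n Φ c a) w))
        = 0 := by
    intro r a w hw
    have h0 : wdP n k (fun y => ∑ c, ginv r c y * gdn n Φ c a y) w = 0 := by
      rw [wdP_congrU hU (fun y hy => hinv1 y hy r a) hw, wdP_const]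
    have h1 : wdP n k (fun y => ∑ c, ginv r c y * gdn n Φ c a y) w
        = ∑ c, wdP n k (fun y => ginv r c y * gdn n Φ c a y) w :=
      wdP_sum Finset.univ (fun c y => ginv r c y * gdn n Φ c a y)
        (fun c _ => (dgi r c w hw).mul (dgd c a w hw)) k
    rw [h1] at h0
    rw [← h0]
    exact Finset.sum_congr rfl fun c _ => (wdP_mul (dgi r c w hw) (dgd c a w hw) k).symm
  -- second derivative of the inverse relation, at the point z
  have hF4 : ∀ r a : Fin n,
      (∑ c, (wdP n k (wdB n l (ginv r c)) z * gdn n Φ c a z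
          + wdB n l (ginv r c) z * wdP n k (gdn n Φ c a) z
          + (wdP n k (ginv r c) z * wdB n l (gdn n Φ c a) z
          + ginv r c z * wdP n k (wdB n l (gdn n Φ c a)) z))) = 0 := by
    intro r a
    have h0 : wdP n k (fun y => ∑ c,
        (wdB n l (ginv r c) y * gdn n Φ c a y + ginv r c y * wdB n l (gdn n Φ c a) y)) z
        = 0 := by
      rw [wdP_congrU hU (fun y hy => hF2 r a y hy) hz, wdP_const]
    have h1 : wdP n k (fun y => ∑ c,
        (wdB n l (ginv r c) y * gdn n Φ c a y + ginv r c y * wdB n l (gdn n Φ c a) y)) z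
        = ∑ c, wdP n k (fun y =>
            wdB n l (ginv r c) y * gdn n Φ c a y + ginv r c y * wdB n l (gdn n Φ c a) y) z :=
      wdP_sum Finset.univ (fun c y =>
          wdB n l (ginv r c) y * gdn n Φ c a y + ginv r c y * wdB n l (gdn n Φ c a) y)
        (fun c _ => ((dwBgi r c z hz).mul (dgd c a z hz)).add
          ((dgi r c z hz).mul (dwBgd c a z hz))) k
    rw [h1] at h0
    rw [← h0]
    refine Finset.sum_congr rfl fun c _ => ?_
    rw [wdP_add (f := fun y => wdB n l (ginv r c) y * gdn n Φ c a y)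
        (g := fun y => ginv r c y * wdB n l (gdn n Φ c a) y) ((dwBgi r c z hz).mul (dgd c a z hz)) ((dgi r c z hz).mul (dwBgd c a z hz)) k,
      wdP_mul (dwBgi r c z hz) (dgd c a z hz) k, wdP_mul (dgi r c z hz) (dwBgd c a z hz) k]
  -- matrices at the point z
  set H : Matrix (Fin n) (Fin n) ℂ := Matrix.of fun a b => ginv a b z with hHdef
  set M : Matrix (Fin n) (Fin n) ℂ := Matrix.of fun a b => gdn n Φ a b z with hMdef
  set MP : Matrix (Fin n) (Fin n) ℂ := Matrix.of fun a b => g3h n Φ a k b z with hMPdef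
  set MQ : Matrix (Fin n) (Fin n) ℂ := Matrix.of fun a b => g3a n Φ a b l z with hMQdef
  set MS : Matrix (Fin n) (Fin n) ℂ := Matrix.of fun a b => g4 n Φ a b k l z with hMSdef
  set DB : Matrix (Fin n) (Fin n) ℂ := Matrix.of fun a b => wdB n l (ginv a b) z with hDBdef
  set DP : Matrix (Fin n) (Fin n) ℂ := Matrix.of fun a b => wdP n k (ginv a b) z with hDPdef
  set DD : Matrix (Fin n) (Fin n) ℂ :=
    Matrix.of fun a b => wdP n k (wdB n l (ginv a b)) z with hDDdef
  have hHM : H * M = 1 := by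
    ext a b
    simp only [Matrix.mul_apply, hHdef, hMdef, Matrix.of_apply, Matrix.one_apply]
    exact hinv1 z hz a b
  have hMH : M * H = 1 := by
    ext a b
    simp only [Matrix.mul_apply, hHdef, hMdef, Matrix.of_apply, Matrix.one_apply]
    exact hinv2 z hz a b
  have e2 : DB * M + H * MQ = 0 := by
    ext a b
    simp only [Matrix.add_apply, Matrix.mul_apply, Matrix.of_apply, Matrix.zero_apply,
      hDBdef, hMdef, hHdef, hMQdef]
    rw [← Finset.sum_add_distrib, ← hF2 a b z hz]
    exact Finset.sum_congr rfl fun c _ => by rw [hQid c b z hz]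
  have e3 : DP * M + H * MP = 0 := by
    ext a b
    simp only [Matrix.add_apply, Matrix.mul_apply, Matrix.of_apply, Matrix.zero_apply,
      hDPdef, hMdef, hHdef, hMPdef]
    rw [← Finset.sum_add_distrib, ← hF3 a b z hz]
    exact Finset.sum_congr rfl fun c _ => by rw [hPid c b z hz]
  have e4 : DD * M + DB * MP + DP * MQ + H * MS = 0 := by
    ext a b
    simp only [Matrix.add_apply, Matrix.mul_apply, Matrix.of_apply, Matrix.zero_apply,
      hDDdef, hDBdef, hDPdef, hMdef, hHdef, hMPdef, hMQdef, hMSdef]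
    rw [← Finset.sum_add_distrib, ← Finset.sum_add_distrib, ← Finset.sum_add_distrib,
      ← hF4 a b]
    refine Finset.sum_congr rfl fun c _ => ?_
    rw [hPid c b z hz, hQid c b z hz, hSid c b z hz]
    ring
  have hDBe : DB = -(H * MQ * H) := by
    calc DB = DB * (M * H) := by rw [hMH, mul_one]
    _ = DB * M * H := by rw [Matrix.mul_assoc]
    _ = -(H * MQ) * H := by rw [add_eq_zero_iff_eq_neg.mp e2]
    _ = -(H * MQ * H) := by rw [neg_mul]
  have hDPe : DP = -(H * MP * H) := by
    calc DP = DP * (M * H) := by rw [hMH, mul_one]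
    _ = DP * M * H := by rw [Matrix.mul_assoc]
    _ = -(H * MP) * H := by rw [add_eq_zero_iff_eq_neg.mp e3]
    _ = -(H * MP * H) := by rw [neg_mul]
  have hDDe : DD = -((DB * MP + DP * MQ + H * MS) * H) := by
    have e4' : DD * M + (DB * MP + DP * MQ + H * MS) = 0 := by rw [← e4]; abel
    calc DD = DD * (M * H) := by rw [hMH, mul_one]
    _ = DD * M * H := by rw [Matrix.mul_assoc]
    _ = -(DB * MP + DP * MQ + H * MS) * H := by rw [add_eq_zero_iff_eq_neg.mp e4']
    _ = -((DB * MP + DP * MQ + H * MS) * H) := by rw [neg_mul]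
  have c1 : DB * (M * DP) = H * MQ * (H * MP) * H := by
    rw [hDBe, hDPe]
    calc -(H * MQ * H) * (M * -(H * MP * H))
        = H * MQ * (H * M * (H * MP * H)) := by noncomm_ring
    _ = H * MQ * (1 * (H * MP * H)) := by rw [hHM]
    _ = H * MQ * (H * MP) * H := by noncomm_ring
  have key : DD - DB * (M * DP) = H * (MP * H * MQ - MS) * H := by
    rw [c1, hDDe, hDBe, hDPe]
    noncomm_ring
  -- translate the goal into matrix entries
  have hX : ∀ a b : Fin n, (MP * H * MQ - MS) a b = Rdn n Φ ginv a b k l z := by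
    intro a b
    simp only [Matrix.sub_apply, Matrix.mul_apply, Matrix.of_apply,
      hMPdef, hHdef, hMQdef, hMSdef, Rdn, Finset.sum_mul]
    congr 1
    exact Finset.sum_congr rfl fun m _ => Finset.sum_congr rfl fun m' _ => by ring
  have lhs2 : (∑ m, ∑ m', wdB n l (ginv q m) z * wdP n k (ginv m' p) z * gdn n Φ m m' z)
      = (DB * (M * DP)) q p := by
    simp only [Matrix.mul_apply, Matrix.of_apply, hDBdef, hMdef, hDPdef, Finset.mul_sum]
    exact Finset.sum_congr rfl fun m _ => Finset.sum_congr rfl fun m' _ => by ring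
  have rhs1 : (∑ a, ∑ b, ginv q a z * ginv b p z * Rdn n Φ ginv a b k l z)
      = (H * (MP * H * MQ - MS) * H) q p := by
    simp only [Matrix.mul_apply (M := H * (MP * H * MQ - MS)), Matrix.mul_apply (M := H),
      Finset.sum_mul]
    rw [Finset.sum_comm]
    refine Finset.sum_congr rfl fun a _ => Finset.sum_congr rfl fun b _ => ?_
    rw [hX b a]
    simp only [hHdef, Matrix.of_apply]
    ring
  have lhs1 : wdP n k (wdB n l (ginv q p)) z = DD q p := rfl
  rw [lhs1, lhs2, rhs1, ← Matrix.sub_apply, key]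

end Main
end
end

section
/- Covariant form of the second-order operator C₂ (equation (E:c2)): for all smooth φ, ψ : U → ℂ one has on U: (1/2)[ Σ g^{q̄p} g^{l̄k} (∂̄_l ∂̄_q φ)(∂_k ∂_p ψ) + Σ g^{q̄p} (∂_p g^{l̄k})(∂̄_l ∂̄_q φ)(∂_k ψ) + Σ (∂̄_l g^{q̄p}) g^{l̄k} (∂̄_q φ)(∂_k ∂_p ψ) + Σ (∂̄_l g^{q̄p})(∂_p g^{l̄k})(∂̄_q φ)(∂_k ψ) ] = (1/2) Σ g^{l̄k} g^{q̄p} φ_{/l̄q̄} ψ_{/kp}, where all repeated indices are summed over 1,…,n. -/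
open scoped BigOperators Topology

noncomputable section

/-- Christoffel symbol `Γ^s_{kp} = Σ_t g_{k p t̄} g^{t̄ s}`. -/
def GamH (n : ℕ) (Φ : (Fin n → ℂ) → ℝ) (ginv : Fin n → Fin n → (Fin n → ℂ) → ℂ)
    (s k p : Fin n) : (Fin n → ℂ) → ℂ :=
  fun z => ∑ t, g3h n Φ k p t z * ginv t s z

/-- Christoffel symbol `Γ^t̄_{l̄ q̄} = Σ_s g^{t̄ s} g_{s q̄ l̄}`. -/
def GamB (n : ℕ) (Φ : (Fin n → ℂ) → ℝ) (ginv : Fin n → Fin n → (Fin n → ℂ) → ℂ)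
    (t l q : Fin n) : (Fin n → ℂ) → ℂ :=
  fun z => ∑ s, ginv t s z * g3a n Φ s q l z

/-- Covariant derivative `ψ_{/kp} = ∂_p ψ_{/k} - Σ_s Γ^s_{pk} ψ_{/s}`. -/
def cdH2 (n : ℕ) (Φ : (Fin n → ℂ) → ℝ) (ginv : Fin n → Fin n → (Fin n → ℂ) → ℂ)
    (ψ : (Fin n → ℂ) → ℂ) (k p : Fin n) : (Fin n → ℂ) → ℂ :=
  fun z => wdP n p (wdP n k ψ) z - ∑ s, GamH n Φ ginv s p k z * wdP n s ψ z

/-- Covariant derivative `ψ_{/kps} = ∂_s ψ_{/kp} - Σ_a Γ^a_{sk} ψ_{/ap} - Σ_a Γ^a_{sp} ψ_{/ka}`. -/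
def cdH3 (n : ℕ) (Φ : (Fin n → ℂ) → ℝ) (ginv : Fin n → Fin n → (Fin n → ℂ) → ℂ)
    (ψ : (Fin n → ℂ) → ℂ) (k p s : Fin n) : (Fin n → ℂ) → ℂ :=
  fun z => wdP n s (cdH2 n Φ ginv ψ k p) z
    - ∑ a, GamH n Φ ginv a s k z * cdH2 n Φ ginv ψ a p z
    - ∑ a, GamH n Φ ginv a s p z * cdH2 n Φ ginv ψ k a z

/-- Covariant derivative `φ_{/l̄q̄} = ∂̄_q φ_{/l̄} - Σ_t Γ^t̄_{q̄l̄} φ_{/t̄}`. -/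
def cdB2 (n : ℕ) (Φ : (Fin n → ℂ) → ℝ) (ginv : Fin n → Fin n → (Fin n → ℂ) → ℂ)
    (φ : (Fin n → ℂ) → ℂ) (l q : Fin n) : (Fin n → ℂ) → ℂ :=
  fun z => wdB n q (wdB n l φ) z - ∑ t, GamB n Φ ginv t q l z * wdB n t φ z

/-- Covariant derivative `φ_{/l̄q̄t̄} = ∂̄_t φ_{/l̄q̄} - Σ_a Γ^ā_{t̄l̄} φ_{/āq̄} - Σ_a Γ^ā_{t̄q̄} φ_{/l̄ā}`. -/
def cdB3 (n : ℕ) (Φ : (Fin n → ℂ) → ℝ) (ginv : Fin n → Fin n → (Fin n → ℂ) → ℂ)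
    (φ : (Fin n → ℂ) → ℂ) (l q t : Fin n) : (Fin n → ℂ) → ℂ :=
  fun z => wdB n t (cdB2 n Φ ginv φ l q) z
    - ∑ a, GamB n Φ ginv a t l z * cdB2 n Φ ginv φ a q z
    - ∑ a, GamB n Φ ginv a t q z * cdB2 n Φ ginv φ l a z

/-- The curvature `R^{q̄p}_{k l̄} = ∂_k ∂̄_l g^{q̄p} - Σ_{m,n} (∂̄_l g^{q̄m})(∂_k g^{n̄p}) g_{m n̄}`. -/
def Rcur (n : ℕ) (Φ : (Fin n → ℂ) → ℝ) (ginv : Fin n → Fin n → (Fin n → ℂ) → ℂ)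
    (q p k l : Fin n) : (Fin n → ℂ) → ℂ :=
  fun z => wdP n k (wdB n l (ginv q p)) z
    - ∑ m, ∑ m', wdB n l (ginv q m) z * wdP n k (ginv m' p) z * gdn n Φ m m' z

/-- `R^{l̄ k q̄ p} = Σ_{a,b} g^{l̄ a} g^{b̄ k} R^{q̄p}_{a b̄}`. -/
def Rup4 (n : ℕ) (Φ : (Fin n → ℂ) → ℝ) (ginv : Fin n → Fin n → (Fin n → ℂ) → ℂ)
    (l k q p : Fin n) : (Fin n → ℂ) → ℂ :=
  fun z => ∑ a, ∑ b, ginv l a z * ginv b k z * Rcur n Φ ginv q p a b z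

/-- `C₁(φ,ψ) = Σ g^{l̄k} (∂̄_l φ)(∂_k ψ)`. -/
def C1op (n : ℕ) (ginv : Fin n → Fin n → (Fin n → ℂ) → ℂ)
    (φ ψ : (Fin n → ℂ) → ℂ) : (Fin n → ℂ) → ℂ :=
  fun z => ∑ l, ∑ k, ginv l k z * wdB n l φ z * wdP n k ψ z

/-- `C₂(φ,ψ) = (1/2) Σ g^{l̄k} g^{q̄p} φ_{/l̄q̄} ψ_{/kp}`. -/
def C2op (n : ℕ) (Φ : (Fin n → ℂ) → ℝ) (ginv : Fin n → Fin n → (Fin n → ℂ) → ℂ)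
    (φ ψ : (Fin n → ℂ) → ℂ) : (Fin n → ℂ) → ℂ :=
  fun z => (1 / 2 : ℂ) * ∑ l, ∑ k, ∑ q, ∑ p,
    ginv l k z * ginv q p z * cdB2 n Φ ginv φ l q z * cdH2 n Φ ginv ψ k p z

/-- `C̃₃(φ,ψ) = (1/6) Σ g^{l̄k} g^{q̄p} g^{t̄s} φ_{/l̄q̄t̄} ψ_{/kps}
  + (1/4) Σ R^{l̄kq̄p} φ_{/l̄q̄} ψ_{/kp}
  + (1/12) Σ g^{n̄m} R^{l̄p}_{mq̄} R^{q̄k}_{pn̄} φ_{/l̄} ψ_{/k}`. -/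
def C3top (n : ℕ) (Φ : (Fin n → ℂ) → ℝ) (ginv : Fin n → Fin n → (Fin n → ℂ) → ℂ)
    (φ ψ : (Fin n → ℂ) → ℂ) : (Fin n → ℂ) → ℂ :=
  fun z =>
    (1 / 6 : ℂ) * (∑ l, ∑ k, ∑ q, ∑ p, ∑ t, ∑ s,
        ginv l k z * ginv q p z * ginv t s z *
          cdB3 n Φ ginv φ l q t z * cdH3 n Φ ginv ψ k p s z)
    + (1 / 4 : ℂ) * (∑ l, ∑ k, ∑ q, ∑ p,
        Rup4 n Φ ginv l k q p z * cdB2 n Φ ginv φ l q z * cdH2 n Φ ginv ψ k p z)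
    + (1 / 12 : ℂ) * (∑ l, ∑ k, (∑ m, ∑ m', ∑ p, ∑ q,
        ginv m' m z * Rcur n Φ ginv l p m q z * Rcur n Φ ginv q k p m' z) *
          wdB n l φ z * wdP n k ψ z)

section Helpers
variable {n : ℕ} {U : Set (Fin n → ℂ)} {f g : (Fin n → ℂ) → ℂ} {z : Fin n → ℂ}

private lemma diffAt {F : Type*} [NormedAddCommGroup F] [NormedSpace ℝ F]
    {h : (Fin n → ℂ) → F} (hU : IsOpen U) (hf : ContDiffOn ℝ (⊤ : ℕ∞) h U) (hz : z ∈ U) :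
    DifferentiableAt ℝ h z :=
  (hf.contDiffAt (hU.mem_nhds hz)).differentiableAt (by simp)

private lemma fderivSmooth (hU : IsOpen U) (hf : ContDiffOn ℝ (⊤ : ℕ∞) f U) :
    ContDiffOn ℝ (⊤ : ℕ∞) (fderiv ℝ f) U :=
  hf.fderiv_of_isOpen hU (by simp)

private lemma ddSmooth (hU : IsOpen U) (hf : ContDiffOn ℝ (⊤ : ℕ∞) f U) (v : Fin n → ℂ) :
    ContDiffOn ℝ (⊤ : ℕ∞) (fun y => fderiv ℝ f y v) U :=
  (fderivSmooth hU hf).clm_apply contDiffOn_const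

private lemma ddDiffAt (hU : IsOpen U) (hf : ContDiffOn ℝ (⊤ : ℕ∞) f U) (hz : z ∈ U) (v : Fin n → ℂ) :
    DifferentiableAt ℝ (fun y => fderiv ℝ f y v) z :=
  diffAt hU (ddSmooth hU hf v) hz

private lemma fderiv_swap (hU : IsOpen U) (hf : ContDiffOn ℝ (⊤ : ℕ∞) f U) (hz : z ∈ U)
    (v w : Fin n → ℂ) :
    fderiv ℝ (fun y => fderiv ℝ f y v) z w = fderiv ℝ (fun y => fderiv ℝ f y w) z v := by
  have hev : ∀ᶠ y in 𝓝 z, HasFDerivAt f (fderiv ℝ f y) y :=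
    Filter.eventually_of_mem (hU.mem_nhds hz) (fun y hy => (diffAt hU hf hy).hasFDerivAt)
  have hd : DifferentiableAt ℝ (fderiv ℝ f) z := diffAt hU (fderivSmooth hU hf) hz
  have h1 : ∀ u : Fin n → ℂ, HasFDerivAt (fun y => fderiv ℝ f y u)
      ((ContinuousLinearMap.apply ℝ ℂ u).comp (fderiv ℝ (fderiv ℝ f) z)) z :=
    fun u => (ContinuousLinearMap.apply ℝ ℂ u).hasFDerivAt.comp z hd.hasFDerivAt
  rw [(h1 v).fderiv, (h1 w).fderiv]
  exact second_derivative_symmetric_of_eventually hev hd.hasFDerivAt w v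

private def W (n : ℕ) (ε : ℂ) (k : Fin n) (f : (Fin n → ℂ) → ℂ) : (Fin n → ℂ) → ℂ :=
  fun y => (1 / 2 : ℂ) *
    (fderiv ℝ f y (ebasis n k) + ε * fderiv ℝ f y (Complex.I • ebasis n k))

private lemma wdP_eq_W (k : Fin n) (f : (Fin n → ℂ) → ℂ) :
    wdP n k f = W n (-Complex.I) k f := by
  funext y; simp only [wdP, W]; ring

private lemma wdB_eq_W (k : Fin n) (f : (Fin n → ℂ) → ℂ) :
    wdB n k f = W n Complex.I k f := by
  funext y; simp only [wdB, W]

private lemma Wsmooth (hU : IsOpen U) (hf : ContDiffOn ℝ (⊤ : ℕ∞) f U) (ε : ℂ) (k : Fin n) :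
    ContDiffOn ℝ (⊤ : ℕ∞) (W n ε k f) U := by
  unfold W
  exact contDiffOn_const.mul ((ddSmooth hU hf _).add (contDiffOn_const.mul (ddSmooth hU hf _)))

private lemma WdiffAt (hU : IsOpen U) (hf : ContDiffOn ℝ (⊤ : ℕ∞) f U) (hz : z ∈ U) (ε : ℂ)
    (k : Fin n) : DifferentiableAt ℝ (W n ε k f) z :=
  diffAt hU (Wsmooth hU hf ε k) hz

private lemma fderiv_W (hU : IsOpen U) (hf : ContDiffOn ℝ (⊤ : ℕ∞) f U) (hz : z ∈ U) (ε : ℂ)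
    (k : Fin n) (u : Fin n → ℂ) :
    fderiv ℝ (W n ε k f) z u = (1 / 2 : ℂ) *
      (fderiv ℝ (fun y => fderiv ℝ f y (ebasis n k)) z u
        + ε * fderiv ℝ (fun y => fderiv ℝ f y (Complex.I • ebasis n k)) z u) := by
  have h : HasFDerivAt (W n ε k f)
      ((1 / 2 : ℂ) • (fderiv ℝ (fun y => fderiv ℝ f y (ebasis n k)) z
        + ε • fderiv ℝ (fun y => fderiv ℝ f y (Complex.I • ebasis n k)) z)) z := by
    exact (((ddDiffAt hU hf hz _).hasFDerivAt.add
      ((ddDiffAt hU hf hz _).hasFDerivAt.const_mul ε)).const_mul (1 / 2 : ℂ))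
  rw [h.fderiv]
  simp [smul_eq_mul]
  ring

private lemma W_comm (hU : IsOpen U) (hf : ContDiffOn ℝ (⊤ : ℕ∞) f U) (hz : z ∈ U) (ε δ : ℂ)
    (a b : Fin n) : W n ε a (W n δ b f) z = W n δ b (W n ε a f) z := by
  have e1 := fderiv_W hU hf hz δ b (n := n)
  have e2 := fderiv_W hU hf hz ε a (n := n)
  show (1 / 2 : ℂ) * (fderiv ℝ (W n δ b f) z (ebasis n a)
      + ε * fderiv ℝ (W n δ b f) z (Complex.I • ebasis n a))
    = (1 / 2 : ℂ) * (fderiv ℝ (W n ε a f) z (ebasis n b)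
      + δ * fderiv ℝ (W n ε a f) z (Complex.I • ebasis n b))
  rw [e1, e1, e2, e2,
    fderiv_swap hU hf hz (ebasis n b) (ebasis n a),
    fderiv_swap hU hf hz (Complex.I • ebasis n b) (ebasis n a),
    fderiv_swap hU hf hz (ebasis n b) (Complex.I • ebasis n a),
    fderiv_swap hU hf hz (Complex.I • ebasis n b) (Complex.I • ebasis n a)]
  ring

private lemma W_congr (hU : IsOpen U) (hz : z ∈ U) (h : Set.EqOn f g U) (ε : ℂ) (k : Fin n) :
    W n ε k f z = W n ε k g z := by
  have : fderiv ℝ f z = fderiv ℝ g z :=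
    Filter.EventuallyEq.fderiv_eq (h.eventuallyEq_of_mem (hU.mem_nhds hz))
  simp only [W, this]

private lemma W_zero {c : ℂ} (hU : IsOpen U) (hz : z ∈ U)
    (h : Set.EqOn f (fun _ => c) U) (ε : ℂ) (k : Fin n) : W n ε k f z = 0 := by
  have : fderiv ℝ f z = fderiv ℝ (fun _ : Fin n → ℂ => c) z :=
    Filter.EventuallyEq.fderiv_eq (h.eventuallyEq_of_mem (hU.mem_nhds hz))
  simp only [W, this, fderiv_const]
  simp

private lemma W_sum_mul {F G : Fin n → (Fin n → ℂ) → ℂ} (hU : IsOpen U) (hz : z ∈ U)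
    (hF : ∀ a, ContDiffOn ℝ (⊤ : ℕ∞) (F a) U) (hG : ∀ a, ContDiffOn ℝ (⊤ : ℕ∞) (G a) U) (ε : ℂ) (k : Fin n) :
    W n ε k (fun y => ∑ a, F a y * G a y) z
      = ∑ a, (W n ε k (F a) z * G a z + F a z * W n ε k (G a) z) := by
  have key : ∀ v : Fin n → ℂ, fderiv ℝ (fun y => ∑ a, F a y * G a y) z v
      = ∑ a, (fderiv ℝ (F a) z v * G a z + F a z * fderiv ℝ (G a) z v) := by
    intro v
    have h1 : fderiv ℝ (fun y => ∑ a, F a y * G a y) z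
        = ∑ a, fderiv ℝ (fun y => F a y * G a y) z :=
      fderiv_fun_sum (fun a _ => (diffAt hU (hF a) hz).mul (diffAt hU (hG a) hz))
    rw [h1, ContinuousLinearMap.sum_apply]
    refine Finset.sum_congr rfl fun a _ => ?_
    rw [fderiv_fun_mul (diffAt hU (hF a) hz) (diffAt hU (hG a) hz)]
    simp [smul_eq_mul]
    ring
  simp only [W, key, Finset.mul_sum, ← Finset.sum_add_distrib]
  refine Finset.sum_congr rfl fun a _ => ?_
  ring

-- user-level lemmas
private lemma wdP_smooth (hU : IsOpen U) (hf : ContDiffOn ℝ (⊤ : ℕ∞) f U) (k : Fin n) :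
    ContDiffOn ℝ (⊤ : ℕ∞) (wdP n k f) U := by rw [wdP_eq_W]; exact Wsmooth hU hf _ k

private lemma wdB_smooth (hU : IsOpen U) (hf : ContDiffOn ℝ (⊤ : ℕ∞) f U) (k : Fin n) :
    ContDiffOn ℝ (⊤ : ℕ∞) (wdB n k f) U := by rw [wdB_eq_W]; exact Wsmooth hU hf _ k

private lemma wdPB_comm (hU : IsOpen U) (hf : ContDiffOn ℝ (⊤ : ℕ∞) f U) (hz : z ∈ U) (a b : Fin n) :
    wdP n a (wdB n b f) z = wdB n b (wdP n a f) z := by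
  rw [wdP_eq_W, wdB_eq_W, wdB_eq_W, wdP_eq_W]
  exact W_comm hU hf hz _ _ a b

private lemma wdPP_comm (hU : IsOpen U) (hf : ContDiffOn ℝ (⊤ : ℕ∞) f U) (hz : z ∈ U) (a b : Fin n) :
    wdP n a (wdP n b f) z = wdP n b (wdP n a f) z := by
  rw [wdP_eq_W, wdP_eq_W, wdP_eq_W, wdP_eq_W]
  exact W_comm hU hf hz _ _ a b

private lemma wdBB_comm (hU : IsOpen U) (hf : ContDiffOn ℝ (⊤ : ℕ∞) f U) (hz : z ∈ U) (a b : Fin n) :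
    wdB n a (wdB n b f) z = wdB n b (wdB n a f) z := by
  rw [wdB_eq_W, wdB_eq_W, wdB_eq_W, wdB_eq_W]
  exact W_comm hU hf hz _ _ a b

private lemma wdP_congr (hU : IsOpen U) (hz : z ∈ U) (h : Set.EqOn f g U) (k : Fin n) :
    wdP n k f z = wdP n k g z := by
  rw [wdP_eq_W, wdP_eq_W]; exact W_congr hU hz h _ k

private lemma wdP_zero {c : ℂ} (hU : IsOpen U) (hz : z ∈ U)
    (h : Set.EqOn f (fun _ => c) U) (k : Fin n) : wdP n k f z = 0 := by
  rw [wdP_eq_W]; exact W_zero hU hz h _ k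

private lemma wdB_zero {c : ℂ} (hU : IsOpen U) (hz : z ∈ U)
    (h : Set.EqOn f (fun _ => c) U) (k : Fin n) : wdB n k f z = 0 := by
  rw [wdB_eq_W]; exact W_zero hU hz h _ k

private lemma wdP_sum_mul {F G : Fin n → (Fin n → ℂ) → ℂ} (hU : IsOpen U) (hz : z ∈ U)
    (hF : ∀ a, ContDiffOn ℝ (⊤ : ℕ∞) (F a) U) (hG : ∀ a, ContDiffOn ℝ (⊤ : ℕ∞) (G a) U) (k : Fin n) :
    wdP n k (fun y => ∑ a, F a y * G a y) z
      = ∑ a, (wdP n k (F a) z * G a z + F a z * wdP n k (G a) z) := by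
  simp only [wdP_eq_W]
  exact W_sum_mul hU hz hF hG _ k

private lemma wdB_sum_mul {F G : Fin n → (Fin n → ℂ) → ℂ} (hU : IsOpen U) (hz : z ∈ U)
    (hF : ∀ a, ContDiffOn ℝ (⊤ : ℕ∞) (F a) U) (hG : ∀ a, ContDiffOn ℝ (⊤ : ℕ∞) (G a) U) (k : Fin n) :
    wdB n k (fun y => ∑ a, F a y * G a y) z
      = ∑ a, (wdB n k (F a) z * G a z + F a z * wdB n k (G a) z) := by
  simp only [wdB_eq_W]
  exact W_sum_mul hU hz hF hG _ k

end Helpers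

namespace KA
variable {M : Type*} [AddCommMonoid M] {α β γ δ : Type*} [Fintype α] [Fintype β] [Fintype γ] [Fintype δ]

private lemma scg {f g : α → M} (h : ∀ a, f a = g a) :
    ∑ a, f a = ∑ a, g a := Finset.sum_congr rfl fun a _ => h a

private lemma sum_swap_blocks (f : α → β → γ → δ → M) :
    ∑ a, ∑ b, ∑ c, ∑ d, f a b c d = ∑ c, ∑ d, ∑ a, ∑ b, f a b c d := by
  calc ∑ a, ∑ b, ∑ c, ∑ d, f a b c d
      = ∑ a, ∑ c, ∑ b, ∑ d, f a b c d := scg fun a => Finset.sum_comm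
    _ = ∑ c, ∑ a, ∑ b, ∑ d, f a b c d := Finset.sum_comm
    _ = ∑ c, ∑ a, ∑ d, ∑ b, f a b c d := scg fun c => scg fun a => Finset.sum_comm
    _ = ∑ c, ∑ d, ∑ a, ∑ b, f a b c d := scg fun c => Finset.sum_comm

/-- (a,b,c) → (c,a,b) -/
private lemma sum_cycle3 (f : α → β → γ → M) :
    ∑ a, ∑ b, ∑ c, f a b c = ∑ c, ∑ a, ∑ b, f a b c := by
  calc ∑ a, ∑ b, ∑ c, f a b c
      = ∑ a, ∑ c, ∑ b, f a b c := scg fun a => Finset.sum_comm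
    _ = ∑ c, ∑ a, ∑ b, f a b c := Finset.sum_comm

/-- (a,b,c) → (b,c,a) -/
private lemma sum_cycle3' (f : α → β → γ → M) :
    ∑ a, ∑ b, ∑ c, f a b c = ∑ b, ∑ c, ∑ a, f a b c := by
  calc ∑ a, ∑ b, ∑ c, f a b c
      = ∑ b, ∑ a, ∑ c, f a b c := Finset.sum_comm
    _ = ∑ b, ∑ c, ∑ a, f a b c := scg fun b => Finset.sum_comm

/-- (a,b,c,d) → (b,c,d,a) -/
private lemma sum_cycle4 (f : α → β → γ → δ → M) :
    ∑ a, ∑ b, ∑ c, ∑ d, f a b c d = ∑ b, ∑ c, ∑ d, ∑ a, f a b c d := by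
  calc ∑ a, ∑ b, ∑ c, ∑ d, f a b c d
      = ∑ b, ∑ a, ∑ c, ∑ d, f a b c d := Finset.sum_comm
    _ = ∑ b, ∑ c, ∑ d, ∑ a, f a b c d := scg fun b => sum_cycle3' _

end KA

private lemma key_algebra {n : ℕ}
    (G : Fin n → Fin n → ℂ) (Hp Hb T S : Fin n → Fin n → Fin n → ℂ)
    (A B : Fin n → Fin n → ℂ) (bφ dψ : Fin n → ℂ)
    (hA : ∀ l q, A l q = A q l) (hB : ∀ k p, B k p = B p k)
    (hS : ∀ s l q, S s l q = S s q l)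
    (hE1 : ∀ p l k, Hp p l k = -∑ a, ∑ b, G l a * T p a b * G b k)
    (hE2 : ∀ l q p, Hb l q p = -∑ b, ∑ s, G q s * S s b l * G b p) :
    (1 / 2 : ℂ) *
      ((∑ q, ∑ p, ∑ l, ∑ k, G q p * G l k * A l q * B k p)
        + (∑ q, ∑ p, ∑ l, ∑ k, G q p * Hp p l k * A l q * dψ k)
        + (∑ q, ∑ p, ∑ l, ∑ k, Hb l q p * G l k * bφ q * B k p)
        + (∑ q, ∑ p, ∑ l, ∑ k, Hb l q p * Hp p l k * bφ q * dψ k))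
    = (1 / 2 : ℂ) * ∑ l, ∑ k, ∑ q, ∑ p,
        G l k * G q p * (A q l - ∑ t, (∑ s, G t s * S s l q) * bφ t)
          * (B p k - ∑ s, (∑ t, T p k t * G t s) * dψ s) := by
  have hC1 : ∀ p l s, (∑ k, G l k * ∑ t, T p k t * G t s) = -Hp p l s := by
    intro p l s; rw [hE1, neg_neg]
    simp only [Finset.mul_sum]
    exact KA.scg fun k => KA.scg fun t => by ring
  have hC2 : ∀ t l p, (∑ q, G q p * ∑ s, G t s * S s l q) = -Hb l t p := by
    intro t l p; rw [hE2 l t p, neg_neg]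
    simp only [Finset.mul_sum]
    refine KA.scg fun q => KA.scg fun s => ?_
    rw [hS s l q]; ring
  -- Term 1
  have hT1 : (∑ q, ∑ p, ∑ l, ∑ k, G q p * G l k * A l q * B k p)
      = ∑ l, ∑ k, ∑ q, ∑ p, G l k * G q p * A q l * B p k := by
    refine (KA.sum_swap_blocks (fun q p l k => G q p * G l k * A l q * B k p)).trans ?_
    exact KA.scg fun l => KA.scg fun k => KA.scg fun q => KA.scg fun p => by
      rw [hA l q, hB k p]; ring
  -- Term 2
  have hT2 : (∑ q, ∑ p, ∑ l, ∑ k, G q p * Hp p l k * A l q * dψ k)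
      = -∑ l, ∑ k, ∑ q, ∑ p,
          G l k * G q p * A q l * (∑ s, (∑ t, T p k t * G t s) * dψ s) := by
    have lhs_eq : (∑ q, ∑ p, ∑ l, ∑ k, G q p * Hp p l k * A l q * dψ k)
        = ∑ l, ∑ q, ∑ p, ∑ k, G q p * A q l * dψ k * Hp p l k := by
      refine (KA.sum_cycle3 (fun q p l => ∑ k, G q p * Hp p l k * A l q * dψ k)).trans ?_
      exact KA.scg fun l => KA.scg fun q => KA.scg fun p => KA.scg fun k => by
        rw [hA l q]; ring
    have rhs_eq : (∑ l, ∑ k, ∑ q, ∑ p,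
          G l k * G q p * A q l * (∑ s, (∑ t, T p k t * G t s) * dψ s))
        = -∑ l, ∑ q, ∑ p, ∑ k, G q p * A q l * dψ k * Hp p l k := by
      calc (∑ l, ∑ k, ∑ q, ∑ p,
            G l k * G q p * A q l * (∑ s, (∑ t, T p k t * G t s) * dψ s))
          = ∑ l, ∑ k, ∑ q, ∑ p, ∑ s,
              G q p * A q l * dψ s * (G l k * ∑ t, T p k t * G t s) := by
            refine KA.scg fun l => KA.scg fun k => KA.scg fun q => KA.scg fun p => ?_
            rw [Finset.mul_sum]
            exact KA.scg fun s => by ring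
        _ = ∑ l, ∑ q, ∑ p, ∑ s, ∑ k,
              G q p * A q l * dψ s * (G l k * ∑ t, T p k t * G t s) :=
            KA.scg fun l => KA.sum_cycle4 _
        _ = ∑ l, ∑ q, ∑ p, ∑ s,
              G q p * A q l * dψ s * (∑ k, G l k * ∑ t, T p k t * G t s) :=
            KA.scg fun l => KA.scg fun q => KA.scg fun p => KA.scg fun s =>
              (Finset.mul_sum _ _ _).symm
        _ = ∑ l, ∑ q, ∑ p, ∑ s, -(G q p * A q l * dψ s * Hp p l s) := by
            refine KA.scg fun l => KA.scg fun q => KA.scg fun p => KA.scg fun s => ?_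
            rw [hC1 p l s]; ring
        _ = -∑ l, ∑ q, ∑ p, ∑ s, G q p * A q l * dψ s * Hp p l s := by
            simp only [Finset.sum_neg_distrib]
    rw [lhs_eq, rhs_eq, neg_neg]
  -- Term 3
  have hT3 : (∑ q, ∑ p, ∑ l, ∑ k, Hb l q p * G l k * bφ q * B k p)
      = -∑ l, ∑ k, ∑ q, ∑ p,
          G l k * G q p * (∑ t, (∑ s, G t s * S s l q) * bφ t) * B p k := by
    have lhs_eq : (∑ q, ∑ p, ∑ l, ∑ k, Hb l q p * G l k * bφ q * B k p)
        = ∑ l, ∑ k, ∑ p, ∑ t, G l k * B p k * bφ t * Hb l t p := by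
      refine (KA.sum_swap_blocks (fun q p l k => Hb l q p * G l k * bφ q * B k p)).trans ?_
      refine (KA.scg fun l => KA.scg (fun k => Finset.sum_comm)).trans ?_
      exact KA.scg fun l => KA.scg fun k => KA.scg fun p => KA.scg fun t => by
        rw [hB k p]; ring
    have rhs_eq : (∑ l, ∑ k, ∑ q, ∑ p,
          G l k * G q p * (∑ t, (∑ s, G t s * S s l q) * bφ t) * B p k)
        = -∑ l, ∑ k, ∑ p, ∑ t, G l k * B p k * bφ t * Hb l t p := by
      calc (∑ l, ∑ k, ∑ q, ∑ p,
            G l k * G q p * (∑ t, (∑ s, G t s * S s l q) * bφ t) * B p k)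
          = ∑ l, ∑ k, ∑ q, ∑ p, ∑ t,
              G l k * B p k * bφ t * (G q p * ∑ s, G t s * S s l q) := by
            refine KA.scg fun l => KA.scg fun k => KA.scg fun q => KA.scg fun p => ?_
            rw [Finset.mul_sum, Finset.sum_mul]
            exact KA.scg fun t => by ring
        _ = ∑ l, ∑ k, ∑ p, ∑ t, ∑ q,
              G l k * B p k * bφ t * (G q p * ∑ s, G t s * S s l q) :=
            KA.scg fun l => KA.scg fun k => KA.sum_cycle3' _
        _ = ∑ l, ∑ k, ∑ p, ∑ t,
              G l k * B p k * bφ t * (∑ q, G q p * ∑ s, G t s * S s l q) :=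
            KA.scg fun l => KA.scg fun k => KA.scg fun p => KA.scg fun t =>
              (Finset.mul_sum _ _ _).symm
        _ = ∑ l, ∑ k, ∑ p, ∑ t, -(G l k * B p k * bφ t * Hb l t p) := by
            refine KA.scg fun l => KA.scg fun k => KA.scg fun p => KA.scg fun t => ?_
            rw [hC2 t l p]; ring
        _ = -∑ l, ∑ k, ∑ p, ∑ t, G l k * B p k * bφ t * Hb l t p := by
            simp only [Finset.sum_neg_distrib]
    rw [lhs_eq, rhs_eq, neg_neg]
  -- Term 4
  have hT4 : (∑ q, ∑ p, ∑ l, ∑ k, Hb l q p * Hp p l k * bφ q * dψ k)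
      = ∑ l, ∑ k, ∑ q, ∑ p,
          G l k * G q p * (∑ t, (∑ s, G t s * S s l q) * bφ t)
            * (∑ s, (∑ t, T p k t * G t s) * dψ s) := by
    have lhs_eq : (∑ q, ∑ p, ∑ l, ∑ k, Hb l q p * Hp p l k * bφ q * dψ k)
        = ∑ l, ∑ p, ∑ t, ∑ s, bφ t * dψ s * Hb l t p * Hp p l s := by
      refine (KA.sum_cycle3 (fun q p l => ∑ k, Hb l q p * Hp p l k * bφ q * dψ k)).trans ?_
      refine (KA.scg fun l => Finset.sum_comm).trans ?_
      exact KA.scg fun l => KA.scg fun p => KA.scg fun t => KA.scg fun s => by ring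
    have rhs_eq : (∑ l, ∑ k, ∑ q, ∑ p,
          G l k * G q p * (∑ t, (∑ s, G t s * S s l q) * bφ t)
            * (∑ s, (∑ t, T p k t * G t s) * dψ s))
        = ∑ l, ∑ p, ∑ t, ∑ s, bφ t * dψ s * Hb l t p * Hp p l s := by
      calc (∑ l, ∑ k, ∑ q, ∑ p,
            G l k * G q p * (∑ t, (∑ s, G t s * S s l q) * bφ t)
              * (∑ s, (∑ t, T p k t * G t s) * dψ s))
          = ∑ l, ∑ k, ∑ q, ∑ p, ∑ t, ∑ s,
              bφ t * dψ s * (G q p * ∑ u, G t u * S u l q)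
                * (G l k * ∑ v, T p k v * G v s) := by
            refine KA.scg fun l => KA.scg fun k => KA.scg fun q => KA.scg fun p => ?_
            rw [show G l k * G q p * (∑ t, (∑ s, G t s * S s l q) * bφ t)
                = ∑ t, G l k * G q p * ((∑ s, G t s * S s l q) * bφ t)
              from Finset.mul_sum _ _ _, Finset.sum_mul_sum]
            exact KA.scg fun t => KA.scg fun s => by ring
        _ = ∑ l, ∑ q, ∑ p, ∑ t, ∑ s, ∑ k,
              bφ t * dψ s * (G q p * ∑ u, G t u * S u l q)
                * (G l k * ∑ v, T p k v * G v s) := by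
            refine KA.scg fun l => ?_
            refine (KA.sum_cycle4 (fun k q p t => ∑ s, bφ t * dψ s *
              (G q p * ∑ u, G t u * S u l q) * (G l k * ∑ v, T p k v * G v s))).trans ?_
            exact KA.scg fun q => KA.scg fun p => KA.scg fun t => Finset.sum_comm
        _ = ∑ l, ∑ p, ∑ t, ∑ s, ∑ q, ∑ k,
              bφ t * dψ s * (G q p * ∑ u, G t u * S u l q)
                * (G l k * ∑ v, T p k v * G v s) := by
            refine KA.scg fun l => ?_
            refine (KA.sum_cycle3' (fun q p t => ∑ s, ∑ k, bφ t * dψ s *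
              (G q p * ∑ u, G t u * S u l q) * (G l k * ∑ v, T p k v * G v s))).trans ?_
            exact KA.scg fun p => KA.scg fun t => Finset.sum_comm
        _ = ∑ l, ∑ p, ∑ t, ∑ s, ∑ q,
              bφ t * dψ s * (G q p * ∑ u, G t u * S u l q)
                * (∑ k, G l k * ∑ v, T p k v * G v s) :=
            KA.scg fun l => KA.scg fun p => KA.scg fun t => KA.scg fun s => KA.scg fun q =>
              (Finset.mul_sum _ _ _).symm
        _ = ∑ l, ∑ p, ∑ t, ∑ s,
              (bφ t * dψ s * (∑ k, G l k * ∑ v, T p k v * G v s))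
                * (∑ q, G q p * ∑ u, G t u * S u l q) := by
            refine KA.scg fun l => KA.scg fun p => KA.scg fun t => KA.scg fun s => ?_
            refine ((KA.scg fun q => by ring : _ = ∑ q, (bφ t * dψ s *
              (∑ k, G l k * ∑ v, T p k v * G v s)) * (G q p * ∑ u, G t u * S u l q))).trans ?_
            exact (Finset.mul_sum _ _ _).symm
        _ = ∑ l, ∑ p, ∑ t, ∑ s, bφ t * dψ s * Hb l t p * Hp p l s := by
            refine KA.scg fun l => KA.scg fun p => KA.scg fun t => KA.scg fun s => ?_
            rw [hC1 p l s, hC2 t l p]; ring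
    rw [lhs_eq, rhs_eq]
  -- assemble
  have expand : (∑ l, ∑ k, ∑ q, ∑ p,
        G l k * G q p * (A q l - ∑ t, (∑ s, G t s * S s l q) * bφ t)
          * (B p k - ∑ s, (∑ t, T p k t * G t s) * dψ s))
      = (∑ l, ∑ k, ∑ q, ∑ p, G l k * G q p * A q l * B p k)
        - (∑ l, ∑ k, ∑ q, ∑ p,
            G l k * G q p * A q l * (∑ s, (∑ t, T p k t * G t s) * dψ s))
        - (∑ l, ∑ k, ∑ q, ∑ p,
            G l k * G q p * (∑ t, (∑ s, G t s * S s l q) * bφ t) * B p k)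
        + (∑ l, ∑ k, ∑ q, ∑ p,
            G l k * G q p * (∑ t, (∑ s, G t s * S s l q) * bφ t)
              * (∑ s, (∑ t, T p k t * G t s) * dψ s)) := by
    refine ((KA.scg fun l => KA.scg fun k => KA.scg fun q => KA.scg fun p => (by ring :
      G l k * G q p * (A q l - ∑ t, (∑ s, G t s * S s l q) * bφ t)
          * (B p k - ∑ s, (∑ t, T p k t * G t s) * dψ s)
        = G l k * G q p * A q l * B p k
          - G l k * G q p * A q l * (∑ s, (∑ t, T p k t * G t s) * dψ s)
          - G l k * G q p * (∑ t, (∑ s, G t s * S s l q) * bφ t) * B p k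
          + G l k * G q p * (∑ t, (∑ s, G t s * S s l q) * bφ t)
              * (∑ s, (∑ t, T p k t * G t s) * dψ s)))).trans ?_
    simp only [Finset.sum_add_distrib, Finset.sum_sub_distrib]
  rw [expand, hT1, hT2, hT3, hT4]
  ring

/-- covariant form of `C₂`, equation (E:c2): on `U`,
`(1/2)[Σ g^{q̄p} g^{l̄k} (∂̄_l ∂̄_q φ)(∂_k ∂_p ψ) + Σ g^{q̄p} (∂_p g^{l̄k})(∂̄_l ∂̄_q φ)(∂_k ψ)
  + Σ (∂̄_l g^{q̄p}) g^{l̄k} (∂̄_q φ)(∂_k ∂_p ψ) + Σ (∂̄_l g^{q̄p})(∂_p g^{l̄k})(∂̄_q φ)(∂_k ψ)]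
  = (1/2) Σ g^{l̄k} g^{q̄p} φ_{/l̄q̄} ψ_{/kp}`. -/
theorem stmt_15 (n : ℕ) (hn : 1 ≤ n) (U : Set (Fin n → ℂ)) (hU : IsOpen U)
    (Φ : (Fin n → ℂ) → ℝ) (hΦ : ContDiffOn ℝ (⊤ : ℕ∞) Φ U)
    (ginv : Fin n → Fin n → (Fin n → ℂ) → ℂ)
    (hginv : ∀ l k : Fin n, ContDiffOn ℝ (⊤ : ℕ∞) (ginv l k) U)
    (hinv1 : ∀ z ∈ U, ∀ l q : Fin n,
      (∑ k, ginv l k z * gdn n Φ k q z) = if l = q then 1 else 0)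
    (hinv2 : ∀ z ∈ U, ∀ p k : Fin n,
      (∑ l, gdn n Φ p l z * ginv l k z) = if p = k then 1 else 0) :
    ∀ φ ψ : (Fin n → ℂ) → ℂ,
      ContDiffOn ℝ (⊤ : ℕ∞) φ U → ContDiffOn ℝ (⊤ : ℕ∞) ψ U →
      ∀ z ∈ U,
        (1 / 2 : ℂ) *
            ((∑ q, ∑ p, ∑ l, ∑ k, ginv q p z * ginv l k z *
                wdB n l (wdB n q φ) z * wdP n k (wdP n p ψ) z)
              + (∑ q, ∑ p, ∑ l, ∑ k, ginv q p z * wdP n p (ginv l k) z *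
                  wdB n l (wdB n q φ) z * wdP n k ψ z)
              + (∑ q, ∑ p, ∑ l, ∑ k, wdB n l (ginv q p) z * ginv l k z *
                  wdB n q φ z * wdP n k (wdP n p ψ) z)
              + (∑ q, ∑ p, ∑ l, ∑ k, wdB n l (ginv q p) z * wdP n p (ginv l k) z *
                  wdB n q φ z * wdP n k ψ z))
          = C2op n Φ ginv φ ψ z := by
  intro φ ψ hφ hψ z hz
  have hPhic : ContDiffOn ℝ (⊤ : ℕ∞) (Phic n Φ) U := by
    have := Complex.ofRealCLM.contDiff.comp_contDiffOn hΦ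
    exact (by simpa [Function.comp_def] using this : ContDiffOn ℝ (⊤ : ℕ∞) (fun x => (Φ x : ℂ)) U)
  have hgdn : ∀ a b : Fin n, ContDiffOn ℝ (⊤ : ℕ∞) (gdn n Φ a b) U := fun a b =>
    wdP_smooth hU (wdB_smooth hU hPhic b) a
  have hPhicB : ∀ b : Fin n, ContDiffOn ℝ (⊤ : ℕ∞) (wdB n b (Phic n Φ)) U := fun b =>
    wdB_smooth hU hPhic b
  -- E1
  have E1 : ∀ p l k : Fin n, wdP n p (ginv l k) z
      = -∑ a, ∑ b, ginv l a z * g3h n Φ p a b z * ginv b k z := by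
    intro p l k
    have hsum : ∀ b : Fin n, (∑ a, wdP n p (ginv l a) z * gdn n Φ a b z)
        = -∑ a, ginv l a z * g3h n Φ p a b z := by
      intro b
      have h0 : wdP n p (fun y => ∑ a, ginv l a y * gdn n Φ a b y) z = 0 :=
        wdP_zero hU hz (fun y hy => hinv1 y hy l b) p
      rw [wdP_sum_mul hU hz (fun a => hginv l a) (fun a => hgdn a b) p,
        Finset.sum_add_distrib] at h0
      exact eq_neg_of_add_eq_zero_left h0
    calc wdP n p (ginv l k) z
        = ∑ a, wdP n p (ginv l a) z * (if a = k then (1:ℂ) else 0) := by simp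
      _ = ∑ a, wdP n p (ginv l a) z * (∑ b, gdn n Φ a b z * ginv b k z) :=
          KA.scg fun a => by rw [hinv2 z hz a k]
      _ = ∑ b, (∑ a, wdP n p (ginv l a) z * gdn n Φ a b z) * ginv b k z := by
          simp only [Finset.mul_sum]
          rw [Finset.sum_comm]
          exact KA.scg fun b => by
            rw [Finset.sum_mul]; exact KA.scg fun a => by ring
      _ = ∑ b, (-∑ a, ginv l a z * g3h n Φ p a b z) * ginv b k z :=
          KA.scg fun b => by rw [hsum b]
      _ = ∑ b, ∑ a, -(ginv l a z * g3h n Φ p a b z * ginv b k z) := by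
          refine KA.scg fun b => ?_
          rw [neg_mul, Finset.sum_mul, ← Finset.sum_neg_distrib]
      _ = -∑ a, ∑ b, ginv l a z * g3h n Φ p a b z * ginv b k z := by
          rw [Finset.sum_comm]
          simp only [Finset.sum_neg_distrib]
  -- symmetry of g3a in the two antiholomorphic slots
  have hSsym : ∀ s a b : Fin n, g3a n Φ s a b z = g3a n Φ s b a z := fun s a b =>
    wdP_congr hU hz (fun y hy => wdBB_comm hU hPhic hy a b) s
  -- E2
  have E2 : ∀ l q p : Fin n, wdB n l (ginv q p) z
      = -∑ b, ∑ s, ginv q s z * g3a n Φ s b l z * ginv b p z := by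
    intro l q p
    have hswap : ∀ s b : Fin n, wdB n l (gdn n Φ s b) z = g3a n Φ s b l z := by
      intro s b
      have c1 : wdB n l (wdP n s (wdB n b (Phic n Φ))) z
          = wdP n s (wdB n l (wdB n b (Phic n Φ))) z :=
        (wdPB_comm hU (hPhicB b) hz s l).symm
      have c2 : wdP n s (wdB n l (wdB n b (Phic n Φ))) z
          = wdP n s (wdB n b (wdB n l (Phic n Φ))) z :=
        wdP_congr hU hz (fun y hy => wdBB_comm hU hPhic hy l b) s
      exact c1.trans c2
    have hsum : ∀ b : Fin n, (∑ a, wdB n l (ginv q a) z * gdn n Φ a b z)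
        = -∑ a, ginv q a z * g3a n Φ a b l z := by
      intro b
      have h0 : wdB n l (fun y => ∑ a, ginv q a y * gdn n Φ a b y) z = 0 :=
        wdB_zero hU hz (fun y hy => hinv1 y hy q b) l
      rw [wdB_sum_mul hU hz (fun a => hginv q a) (fun a => hgdn a b) l,
        Finset.sum_add_distrib] at h0
      have h2 := eq_neg_of_add_eq_zero_left h0
      rw [h2]
      rw [neg_inj]
      exact KA.scg fun a => by rw [hswap a b]
    calc wdB n l (ginv q p) z
        = ∑ a, wdB n l (ginv q a) z * (if a = p then (1:ℂ) else 0) := by simp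
      _ = ∑ a, wdB n l (ginv q a) z * (∑ b, gdn n Φ a b z * ginv b p z) :=
          KA.scg fun a => by rw [hinv2 z hz a p]
      _ = ∑ b, (∑ a, wdB n l (ginv q a) z * gdn n Φ a b z) * ginv b p z := by
          simp only [Finset.mul_sum]
          rw [Finset.sum_comm]
          exact KA.scg fun b => by
            rw [Finset.sum_mul]; exact KA.scg fun a => by ring
      _ = ∑ b, (-∑ a, ginv q a z * g3a n Φ a b l z) * ginv b p z :=
          KA.scg fun b => by rw [hsum b]
      _ = ∑ b, ∑ a, -(ginv q a z * g3a n Φ a b l z * ginv b p z) := by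
          refine KA.scg fun b => ?_
          rw [neg_mul, Finset.sum_mul, ← Finset.sum_neg_distrib]
      _ = -∑ a, ∑ b, ginv q a z * g3a n Φ a b l z * ginv b p z := by
          rw [Finset.sum_comm]
          simp only [Finset.sum_neg_distrib]
      _ = -∑ b, ∑ s, ginv q s z * g3a n Φ s b l z * ginv b p z := by
          exact congrArg Neg.neg Finset.sum_comm
  have hA : ∀ l q : Fin n, wdB n l (wdB n q φ) z = wdB n q (wdB n l φ) z := fun l q =>
    wdBB_comm hU hφ hz l q
  have hB : ∀ k p : Fin n, wdP n k (wdP n p ψ) z = wdP n p (wdP n k ψ) z := fun k p =>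
    wdPP_comm hU hψ hz k p
  have main := key_algebra (fun l k => ginv l k z)
    (fun p l k => wdP n p (ginv l k) z)
    (fun l q p => wdB n l (ginv q p) z)
    (fun p a b => g3h n Φ p a b z)
    (fun s l q => g3a n Φ s l q z)
    (fun l q => wdB n l (wdB n q φ) z)
    (fun k p => wdP n k (wdP n p ψ) z)
    (fun q => wdB n q φ z)
    (fun k => wdP n k ψ z)
    hA hB hSsym E1 E2
  simp only [C2op, cdB2, cdH2, GamB, GamH]
  exact main
end
end
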